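/- arXiv:1705.07270 — 7 statements merged into one kernel-verified Lean document; each statement's English description precedes it below -/
import Mathlib

section
/- For the path P_n on n ≥ 1 vertices, vcfc(P_n) = ⌈log₂(n+1)⌉. -/
open SimpleGraph

/-- A walk is conflict-free w.r.t. a vertex-coloring if some color appears on
exactly one of its vertices. -/
def Walk.ConflictFree {V α : Type*} [DecidableEq α] {G : SimpleGraph V} (C : V → α)
    {u v : V} (p : G.Walk u v) : Prop :=
  ∃ c : α, (p.support.countP (fun x => decide (C x = c))) = 1

/-- A vertex-colored graph is conflict-free vertex-connected if any two vertices
are joined by a conflict-free path. -/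
def CFVConnected {V α : Type*} [DecidableEq α] (G : SimpleGraph V) (C : V → α) : Prop :=
  ∀ u v : V, ∃ p : G.Walk u v, p.IsPath ∧ Walk.ConflictFree C p

/-- The conflict-free vertex-connection number: the smallest number of colors in a
vertex-coloring making `G` conflict-free vertex-connected. -/
noncomputable def vcfc {V : Type*} (G : SimpleGraph V) : ℕ :=
  sInf {k : ℕ | ∃ C : V → Fin k, CFVConnected G C}

/-!
Lower bound: in a conflict-free colouring of a path, the colour that occurs exactly once on the
whole path splits it into two conflict-free subpaths that both avoid this colour; by induction a
path coloured with `k` colours has at most `2 ^ k - 1` vertices.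

Upper bound: colour vertex `i` (counted from `1`) by the 2-adic valuation of `i`. In a run of
consecutive positive integers the largest valuation is attained only once, since between two
multiples of `2 ^ c` lies a multiple of `2 ^ (c + 1)`.
-/

namespace List

variable {α : Type*} [DecidableEq α]

theorem exists_eq_append_cons_of_count_eq_one {a : α} {l : List α} (h : l.count a = 1) :
    ∃ l₁ l₂, l = l₁ ++ a :: l₂ ∧ a ∉ l₁ ∧ a ∉ l₂ := by
  obtain ⟨l₁, l₂, rfl⟩ := append_of_mem (count_pos_iff.1 (h ▸ Nat.one_pos))
  simp only [count_append, count_cons_self] at h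
  exact ⟨l₁, l₂, rfl, count_eq_zero.1 (by omega), count_eq_zero.1 (by omega)⟩

theorem length_lt_two_pow_card_toFinset {l : List α}
    (h : ∀ s, s <:+: l → s ≠ [] → ∃ a, s.count a = 1) : l.length < 2 ^ l.toFinset.card := by
  rcases eq_or_ne l [] with rfl | hne
  · simp
  obtain ⟨a, ha⟩ := h l (infix_refl l) hne
  obtain ⟨l₁, l₂, rfl, ha₁, ha₂⟩ := exists_eq_append_cons_of_count_eq_one ha
  set k := (l₁ ++ a :: l₂).toFinset.card
  have hk : 2 ^ k = 2 * 2 ^ (k - 1) := by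
    rw [← pow_succ']
    congr 1
    have : 0 < k := Finset.card_pos.2 ⟨a, by simp⟩
    omega
  have hside : ∀ l' : List α, a ∉ l' → l'.toFinset ⊆ (l₁ ++ a :: l₂).toFinset →
      2 ^ l'.toFinset.card ≤ 2 ^ (k - 1) := by
    intro l' ha' hl'
    refine Nat.pow_le_pow_right two_pos ?_
    rw [← Finset.card_erase_of_mem (by simp : a ∈ (l₁ ++ a :: l₂).toFinset)]
    exact Finset.card_le_card fun x hx => Finset.mem_erase.2 ⟨by rintro rfl; simp_all, hl' hx⟩
  have ih₁ := length_lt_two_pow_card_toFinset (l := l₁) fun s hs =>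
    h s (hs.trans (prefix_append _ _).isInfix)
  have ih₂ := length_lt_two_pow_card_toFinset (l := l₂) fun s hs =>
    h s (hs.trans (by simpa using (suffix_append (l₁ ++ [a]) l₂).isInfix))
  have h₁ := hside l₁ ha₁ (by intro x; simp_all)
  have h₂ := hside l₂ ha₂ (by intro x; simp_all)
  simp only [length_append, length_cons]
  omega
termination_by l.length

theorem count_map_eq_count_of_eq_imp_eq {β : Type*} [DecidableEq β] {f : α → β} {l : List α}
    {m : α} (h : ∀ x ∈ l, f x = f m → x = m) : (l.map f).count (f m) = l.count m := by
  rw [count_eq_countP, count_eq_countP, countP_map]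
  refine countP_congr fun x hx => ?_
  simp only [Function.comp_apply, beq_iff_eq]
  exact ⟨h x hx, congrArg f⟩

theorem exists_range'_of_isInfix_range' {t : List ℕ} {a n : ℕ} (h : t <:+: range' a n) :
    ∃ b len, t = range' b len ∧ a ≤ b ∧ b + len ≤ a + n := by
  obtain ⟨l₁, l₂, h⟩ := h
  obtain ⟨k, hk, h₁, -⟩ := range'_eq_append_iff.1 h.symm
  obtain ⟨j, hj, -, h₂⟩ := range'_eq_append_iff.1 h₁.symm
  exact ⟨a + j, k - j, by simpa using h₂, by omega, by omega⟩

end List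

theorem exists_two_pow_succ_dvd_between {c p q : ℕ} (hp : 2 ^ c ∣ p) (hq : 2 ^ c ∣ q)
    (hpq : p < q) : ∃ r, p ≤ r ∧ r ≤ q ∧ 2 ^ (c + 1) ∣ r := by
  obtain ⟨s, rfl⟩ := hp
  obtain ⟨t, rfl⟩ := hq
  have hst : s < t := Nat.lt_of_mul_lt_mul_left hpq
  rcases Nat.even_or_odd s with ⟨j, rfl⟩ | ⟨j, rfl⟩
  · exact ⟨2 ^ c * (j + j), le_rfl, by gcongr, ⟨j, by ring⟩⟩
  · exact ⟨2 ^ c * (2 * j + 1 + 1), by gcongr; omega, by gcongr; omega, ⟨j + 1, by ring⟩⟩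

theorem exists_count_map_padicValNat_range'_eq_one {a len : ℕ} (ha : 0 < a) (hlen : 0 < len) :
    ∃ c, ((List.range' a len).map (padicValNat 2)).count c = 1 := by
  set l := List.range' a len
  have hpos : ∀ x ∈ l, x ≠ 0 := fun x hx => by
    have := List.mem_range'_1.1 hx
    omega
  obtain ⟨m, hm, hmax⟩ := l.toFinset.exists_max_image (padicValNat 2)
    ⟨a, List.mem_toFinset.2 (List.mem_range'_1.2 ⟨le_rfl, by omega⟩)⟩
  rw [List.mem_toFinset] at hm
  refine ⟨padicValNat 2 m, ?_⟩
  rw [List.count_map_eq_count_of_eq_imp_eq, List.count_eq_one_of_mem List.nodup_range' hm]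
  intro x hx hxm
  by_contra hne
  obtain ⟨p, hp, q, hq, hpq, hpm, hqm⟩ : ∃ p ∈ l, ∃ q ∈ l, p < q ∧
      padicValNat 2 p = padicValNat 2 m ∧ padicValNat 2 q = padicValNat 2 m :=
    (lt_or_gt_of_ne hne).elim (fun h => ⟨x, hx, m, hm, h, hxm, rfl⟩)
      (fun h => ⟨m, hm, x, hx, h, rfl, hxm⟩)
  obtain ⟨r, hpr, hrq, hr⟩ := exists_two_pow_succ_dvd_between
    (hpm ▸ pow_padicValNat_dvd) (hqm ▸ pow_padicValNat_dvd) hpq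
  have hrl : r ∈ l := by
    have := List.mem_range'_1.1 hp
    have := List.mem_range'_1.1 hq
    exact List.mem_range'_1.2 (by omega)
  have := (padicValNat_dvd_iff_le (hpos r hrl)).1 hr
  have := hmax r (List.mem_toFinset.2 hrl)
  omega

theorem Walk.conflictFree_iff_exists_count_eq_one {V α : Type*} [DecidableEq α]
    {G : SimpleGraph V} (C : V → α) {u v : V} (p : G.Walk u v) :
    Walk.ConflictFree C p ↔ ∃ c, (p.support.map C).count c = 1 := by
  simp only [Walk.ConflictFree, List.count_eq_countP, List.countP_map]
  rfl

namespace SimpleGraph.pathGraph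

variable {n : ℕ}

theorem support_map_val_of_isPath {u v : Fin n} {p : (pathGraph n).Walk u v} (hp : p.IsPath)
    (huv : u ≤ v) : p.support.map Fin.val = List.range' u (v + 1 - u) := by
  induction p with
  | nil => simp
  | @cons u w v hadj q ih =>
    obtain ⟨hq, hu⟩ := (Walk.cons_isPath_iff _ _).1 hp
    have huv' : u < v := lt_of_le_of_ne huv fun h => hu (h ▸ q.end_mem_support)
    rw [pathGraph_adj] at hadj
    rcases hadj with hw | hw
    · rw [Walk.support_cons, List.map_cons, ih hq (by rw [Fin.le_def]; omega),
        show (v : ℕ) + 1 - u = ((v : ℕ) + 1 - w) + 1 by omega, List.range'_succ, hw]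
    · refine absurd ?_ hu
      have hmem : u.val ∈ q.support.map Fin.val := by
        rw [ih hq (by rw [Fin.le_def]; omega), List.mem_range'_1]
        omega
      obtain ⟨x, hx, hxu⟩ := List.mem_map.1 hmem
      exact Fin.ext hxu ▸ hx

theorem exists_forall_isPath_support_eq_of_isInfix {t : List (Fin n)}
    (ht : t <:+: List.finRange n) (hne : t ≠ []) :
    ∃ u v : Fin n, ∀ p : (pathGraph n).Walk u v, p.IsPath → p.support = t := by
  have hrange : (List.finRange n).map Fin.val = List.range' 0 n :=
    List.ext_getElem (by simp) (by simp)
  obtain ⟨b, len, hb, -, hbn⟩ := List.exists_range'_of_isInfix_range' (hrange ▸ ht.map Fin.val)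
  have hlen : 0 < len := Nat.pos_of_ne_zero (by rintro rfl; simp_all)
  refine ⟨⟨b, by omega⟩, ⟨b + len - 1, by omega⟩, fun p hp => ?_⟩
  apply List.map_injective_iff.2 Fin.val_injective
  rw [support_map_val_of_isPath hp (by simp only [Fin.mk_le_mk]; omega), hb]
  congr 1
  simp only
  omega

end SimpleGraph.pathGraph

theorem lt_two_pow_card_of_cfvConnected_pathGraph {α : Type*} [Fintype α] [DecidableEq α]
    {n : ℕ} {C : Fin n → α} (hC : CFVConnected (pathGraph n) C) : n < 2 ^ Fintype.card α := by
  have hcf : ∀ s, s <:+: (List.finRange n).map C → s ≠ [] → ∃ c, s.count c = 1 := by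
    intro s hs hne
    obtain ⟨t, ht, rfl⟩ := List.infix_map_iff.1 hs
    obtain ⟨u, v, hsupp⟩ :=
      pathGraph.exists_forall_isPath_support_eq_of_isInfix ht (by rintro rfl; simp at hne)
    obtain ⟨p, hp, hpcf⟩ := hC u v
    rwa [Walk.conflictFree_iff_exists_count_eq_one, hsupp p hp] at hpcf
  calc n = ((List.finRange n).map C).length := by simp
    _ < 2 ^ ((List.finRange n).map C).toFinset.card := List.length_lt_two_pow_card_toFinset hcf
    _ ≤ 2 ^ Fintype.card α := Nat.pow_le_pow_right two_pos (Finset.card_le_univ _)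

theorem padicValNat_two_lt_clog_succ {m n : ℕ} (hm : m ≠ 0) (hmn : m ≤ n) :
    padicValNat 2 m < Nat.clog 2 (n + 1) :=
  (Nat.lt_clog_iff_pow_lt one_lt_two).2
    (lt_of_le_of_lt (Nat.le_of_dvd (Nat.pos_of_ne_zero hm) pow_padicValNat_dvd) (by omega))

def rulerColoring (n : ℕ) : Fin n → Fin (Nat.clog 2 (n + 1)) :=
  fun i => ⟨padicValNat 2 (i + 1), padicValNat_two_lt_clog_succ i.val.succ_ne_zero i.isLt⟩

theorem conflictFree_rulerColoring_of_isPath {n : ℕ} {u v : Fin n}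
    {p : (pathGraph n).Walk u v} (hp : p.IsPath) : Walk.ConflictFree (rulerColoring n) p := by
  wlog huv : u ≤ v generalizing u v
  · have := this hp.reverse (le_of_not_ge huv)
    rw [Walk.conflictFree_iff_exists_count_eq_one] at this ⊢
    simpa [Walk.support_reverse, List.map_reverse, List.count_reverse] using this
  have hcolors : p.support.map (Fin.val ∘ rulerColoring n) =
      (List.range' (u + 1) (v + 1 - u)).map (padicValNat 2) := by
    rw [show Fin.val ∘ rulerColoring n = (padicValNat 2 ∘ (· + 1)) ∘ Fin.val from rfl,
      ← List.map_map, pathGraph.support_map_val_of_isPath hp huv, ← List.map_map,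
      ← List.range'_succ_left]
  obtain ⟨c, hc⟩ := exists_count_map_padicValNat_range'_eq_one u.val.succ_pos
    (by omega : 0 < (v : ℕ) + 1 - u)
  obtain ⟨x, -, rfl⟩ := List.mem_map.1 (hcolors ▸ List.count_pos_iff.1 (hc ▸ Nat.one_pos))
  refine (Walk.conflictFree_iff_exists_count_eq_one _ _).2 ⟨rulerColoring n x, ?_⟩
  rwa [← List.count_map_of_injective _ _ Fin.val_injective, List.map_map, hcolors]

theorem cfvConnected_rulerColoring (n : ℕ) : CFVConnected (pathGraph n) (rulerColoring n) :=
  fun u v => ⟨_, (pathGraph_preconnected n u v).some.bypass_isPath,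
    conflictFree_rulerColoring_of_isPath (pathGraph_preconnected n u v).some.bypass_isPath⟩

theorem vcfc_pathGraph_general (n : ℕ) :
    vcfc (SimpleGraph.pathGraph n) = Nat.clog 2 (n + 1) := by
  refine le_antisymm (Nat.sInf_le ⟨rulerColoring n, cfvConnected_rulerColoring n⟩) ?_
  refine le_csInf ⟨_, rulerColoring n, cfvConnected_rulerColoring n⟩ ?_
  rintro k ⟨C, hC⟩
  have hlt := lt_two_pow_card_of_cfvConnected_pathGraph hC
  rw [Fintype.card_fin] at hlt
  exact (Nat.clog_le_iff_le_pow one_lt_two).2 hlt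

theorem vcfc_pathGraph (n : ℕ) (hn : 1 ≤ n) :
    vcfc (SimpleGraph.pathGraph n) = Nat.clog 2 (n + 1) :=
  vcfc_pathGraph_general n
end

section
/- Any vertex-coloring of a path with k colors that makes the path conflict-free vertex-connected forces the path to have at most 2^k − 1 vertices. -/
/-!
In a path graph the only path between `u ≤ v` runs through exactly the vertices of `[u, v]`, so
the hypothesis says that every interval has a color occurring on it exactly once. Pick such a
color `c` for the whole path, occurring only at `p`. The intervals on either side of `p` avoid
`c`, so each side is conflict-free with one color fewer and by induction has fewer than
`2 ^ (k - 1)` vertices; the path therefore has fewer than `2 ^ k`.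
-/

open SimpleGraph

open Finset

section Intervals

variable {α β : Type*} [LinearOrder α] [DecidableEq β]

/-- `s` is the vertex set of a path laid out in the order of `α`, and its intervals are the
subpaths. -/
def ConflictFreeOnIntervals (D : α → β) (s : Finset α) : Prop :=
  ∀ i ∈ s, ∀ j ∈ s, i ≤ j → ∃ c, #{x ∈ s | i ≤ x ∧ x ≤ j ∧ D x = c} = 1

theorem ConflictFreeOnIntervals.mono {D : α → β} {s t : Finset α}
    (hs : ConflictFreeOnIntervals D s) (hts : t ⊆ s)
    (ht : ∀ i ∈ t, ∀ j ∈ t, ∀ x ∈ s, i ≤ x → x ≤ j → x ∈ t) :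
    ConflictFreeOnIntervals D t := by
  intro i hi j hj hij
  obtain ⟨c, hc⟩ := hs i (hts hi) j (hts hj) hij
  refine ⟨c, ?_⟩
  convert hc using 2
  ext x
  simp only [mem_filter]
  exact ⟨fun hx => ⟨hts hx.1, hx.2⟩, fun hx => ⟨ht i hi j hj x hx.1 hx.2.1 hx.2.2.1, hx.2⟩⟩

theorem ConflictFreeOnIntervals.exists_unique_color {D : α → β} {s : Finset α}
    (hs : ConflictFreeOnIntervals D s) (hne : s.Nonempty) :
    ∃ p ∈ s, ∀ x ∈ s, D x = D p → x = p := by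
  obtain ⟨c, hc⟩ := hs _ (s.min'_mem hne) _ (s.max'_mem hne) (s.min'_le_max' hne)
  obtain ⟨p, hp⟩ := card_eq_one.mp hc
  have hmem : ∀ x, x ∈ s ∧ D x = c ↔ x = p := fun x => by
    rw [← mem_singleton (a := p), ← hp, mem_filter]
    exact ⟨fun hx => ⟨hx.1, s.min'_le x hx.1, s.le_max' x hx.1, hx.2⟩,
      fun hx => ⟨hx.1, hx.2.2.2⟩⟩
  obtain ⟨hps, hpc⟩ := (hmem p).mpr rfl
  exact ⟨p, hps, fun x hx hxp => (hmem x).mp ⟨hx, hxp.trans hpc⟩⟩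

theorem ConflictFreeOnIntervals.card_lt_two_pow {D : α → β} {s : Finset α} {m : ℕ}
    (hs : ConflictFreeOnIntervals D s) (hm : #(s.image D) ≤ m) : #s < 2 ^ m := by
  induction m generalizing s with
  | zero => simpa using hm
  | succ m ih =>
    rcases s.eq_empty_or_nonempty with rfl | hne
    · simp
    obtain ⟨p, hps, hunique⟩ := hs.exists_unique_color hne
    have hside : ∀ t ⊆ s, p ∉ t → (∀ i ∈ t, ∀ j ∈ t, ∀ x ∈ s, i ≤ x → x ≤ j → x ∈ t) →
        #t < 2 ^ m := by
      intro t hts hpt hconv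
      refine ih (hs.mono hts hconv) ?_
      have himage : t.image D ⊆ (s.image D).erase (D p) := by
        intro y hy
        obtain ⟨x, hx, rfl⟩ := mem_image.mp hy
        exact mem_erase.mpr ⟨fun hxp => hpt (hunique x (hts hx) hxp ▸ hx),
          mem_image_of_mem D (hts hx)⟩
      have := card_le_card himage
      rw [card_erase_of_mem (mem_image_of_mem D hps)] at this
      omega
    have hleft := hside {x ∈ s | x < p} (filter_subset _ _) (by simp) (by grind)
    have hright := hside {x ∈ s | p < x} (filter_subset _ _) (by simp) (by grind)
    have hcover : s ⊆ insert p ({x ∈ s | x < p} ∪ {x ∈ s | p < x}) := by grind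
    calc #s ≤ #{x ∈ s | x < p} + #{x ∈ s | p < x} + 1 :=
          (card_le_card hcover).trans ((card_insert_le _ _).trans (by grw [card_union_le]))
      _ < 2 ^ (m + 1) := by rw [pow_succ]; omega

end Intervals

namespace SimpleGraph.Walk

theorem IsPath.eq_of_mem_support_takeUntil_of_mem_support_dropUntil {V : Type*}
    [DecidableEq V] {G : SimpleGraph V} {u v x y : V} {p : G.Walk u v} (hp : p.IsPath)
    (hx : x ∈ p.support) (hy₁ : y ∈ (p.takeUntil x hx).support)
    (hy₂ : y ∈ (p.dropUntil x hx).support) : y = x := by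
  have hnodup := hp.support_nodup
  rw [← p.take_spec hx, support_append] at hnodup
  by_contra hyx
  rw [← cons_tail_support] at hy₂
  exact List.disjoint_of_nodup_append hnodup hy₁ ((List.mem_cons.mp hy₂).resolve_left hyx)

variable {α : Type*} [LinearOrder α]

theorem mem_support_hasse_of_le_of_le {u v m : α} (p : (hasse α).Walk u v)
    (hum : u ≤ m) (hmv : m ≤ v) : m ∈ p.support := by
  induction p with
  | nil => simp [le_antisymm hmv hum]
  | @cons a b w hadj q ih =>
    rcases hum.eq_or_lt with rfl | hlt
    · exact start_mem_support _
    have hbm : b ≤ m := by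
      rcases hasse_adj.mp hadj with hab | hba
      · exact hab.ge_of_gt hlt
      · exact (hba.lt.trans hlt).le
    exact List.mem_cons_of_mem _ (ih hbm hmv)

theorem IsPath.mem_support_hasse_iff {u v x : α} {p : (hasse α).Walk u v} (hp : p.IsPath)
    (huv : u ≤ v) : x ∈ p.support ↔ u ≤ x ∧ x ≤ v := by
  refine ⟨fun hx => ⟨?_, ?_⟩, fun hx => mem_support_hasse_of_le_of_le p hx.1 hx.2⟩
  · by_contra! hxu
    exact hxu.ne' <| hp.eq_of_mem_support_takeUntil_of_mem_support_dropUntil hx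
      (start_mem_support _) (mem_support_hasse_of_le_of_le _ hxu.le huv)
  · by_contra! hvx
    exact hvx.ne <| hp.eq_of_mem_support_takeUntil_of_mem_support_dropUntil hx
      (mem_support_hasse_of_le_of_le _ huv hvx.le) (end_mem_support _)

end SimpleGraph.Walk

theorem CFVConnected.conflictFreeOnIntervals_univ {α β : Type*} [LinearOrder α] [Fintype α]
    [DecidableEq β] {C : α → β} (h : CFVConnected (hasse α) C) :
    ConflictFreeOnIntervals C univ := by
  intro u _ v _ huv
  obtain ⟨p, hp, c, hc⟩ := h u v
  refine ⟨c, ?_⟩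
  rw [← hc, List.countP_eq_length_filter, ← List.toFinset_card_of_nodup (hp.support_nodup.filter _)]
  congr 1
  ext x
  simp [hp.mem_support_hasse_iff huv, and_assoc]

theorem pathGraph_card_le_of_cfvc (n k : ℕ) (C : Fin n → Fin k)
    (h : CFVConnected (SimpleGraph.pathGraph n) C) :
    n ≤ 2 ^ k - 1 := by
  have hlt : #(univ : Finset (Fin n)) < 2 ^ k :=
    h.conflictFreeOnIntervals_univ.card_lt_two_pow ((card_le_univ _).trans_eq (Fintype.card_fin k))
  rw [card_fin] at hlt
  omega
end

section
/- If G is a 2-connected graph, then vcfc(G) = 2. -/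
open SimpleGraph

/-- `G` is 2-connected: at least 3 vertices and removing any single vertex leaves it connected. -/
def TwoConnected {V : Type*} [Fintype V] (G : SimpleGraph V) : Prop :=
  3 ≤ Fintype.card V ∧ ∀ v : V, ((⊤ : G.Subgraph).deleteVerts {v}).coe.Connected

/-!
Colour one vertex `v` with its own colour and every other vertex with a second colour: a path
is then conflict-free as soon as it passes through `v`, and one colour never suffices. So the
theorem reduces to the fan property of 2-connected graphs: any two vertices `u ≠ w` are joined by
a path through `v`. For this, first put `u` and `v` on a common cycle (two internally disjoint
`u`–`v` paths, built by Whitney's argument along a `u`–`v` walk), then run a path from `w` to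
the cycle avoiding `u`; it ends on one arc, and going around the other arc to `v` and back
along the first one yields the required path.
-/

namespace SimpleGraph

variable {V : Type*} {G : SimpleGraph V}

namespace Walk

/-- A single edge traversed twice counts, as a degenerate cycle through its ends. -/
def InternallyDisjoint {u v : V} (p q : G.Walk u v) : Prop :=
  ∀ z ∈ p.support, z ∈ q.support → z = u ∨ z = v

lemma InternallyDisjoint.symm {u v : V} {p q : G.Walk u v} (h : p.InternallyDisjoint q) :
    q.InternallyDisjoint p :=
  fun z hq hp => h z hp hq

lemma IsPath.append_of_support_inter {u v w : V} {p : G.Walk u v} {q : G.Walk v w}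
    (hp : p.IsPath) (hq : q.IsPath) (h : ∀ z ∈ p.support, z ∈ q.support → z = v) :
    (p.append q).IsPath := by
  rw [isPath_def, support_append, List.nodup_append]
  have hq' := hq.support_nodup
  rw [← q.cons_tail_support, List.nodup_cons] at hq'
  refine ⟨hp.support_nodup, hq'.2, ?_⟩
  rintro a hap _ haq rfl
  exact hq'.1 (h a hap (List.mem_of_mem_tail haq) ▸ haq)

variable [DecidableEq V]

lemma IsPath.notMem_support_takeUntil {u v w z : V} {p : G.Walk u v} (hp : p.IsPath)
    (hw : w ∈ p.support) (hz : z ∈ (p.dropUntil w hw).support) (hzw : z ≠ w) :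
    z ∉ (p.takeUntil w hw).support := by
  have hp' : ((p.takeUntil w hw).append (p.dropUntil w hw)).IsPath := (p.take_spec hw).symm ▸ hp
  exact fun hz' => hp'.ne_of_mem_support_of_append hzw hz' hz rfl

lemma InternallyDisjoint.eq_of_mem_dropUntil {u v y z : V} {p q : G.Walk u v}
    (hpq : p.InternallyDisjoint q) (hq : q.IsPath) (hy : y ∈ q.support) (hyu : y ≠ u)
    (hzq : z ∈ (q.dropUntil y hy).support) (hzp : z ∈ p.support) : z = v := by
  rcases hpq z hzp (q.support_dropUntil_subset_support hy hzq) with rfl | rfl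
  · exact absurd (start_mem_support _) (hq.notMem_support_takeUntil hy hzq (Ne.symm hyu))
  · rfl

lemma InternallyDisjoint.isPath_append_reverse_dropUntil {u v y : V} {p q : G.Walk u v}
    (hpq : p.InternallyDisjoint q) (hp : p.IsPath) (hq : q.IsPath) (hy : y ∈ p.support)
    (hyu : y ≠ u) : (q.append (p.dropUntil y hy).reverse).IsPath :=
  hq.append_of_support_inter (hp.dropUntil hy).reverse fun _ hzq hz =>
    hpq.symm.eq_of_mem_dropUntil hp hy hyu (by simpa using hz) hzq

lemma InternallyDisjoint.exists_cons_of_isPath_to_support {t u v y : V} {p q : G.Walk u v}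
    (hpq : p.InternallyDisjoint q) (hp : p.IsPath) (hq : q.IsPath) (hadj : G.Adj t u)
    (htv : t ≠ v) {r : G.Walk t y} (hr : r.IsPath) (hur : u ∉ r.support)
    (hy : y ∈ q.support) (hrp : ∀ z ∈ r.support, z ∈ p.support → z = y)
    (hrq : ∀ z ∈ r.support, z ∈ q.support → z = y) :
    ∃ p' q' : G.Walk t v, p'.IsPath ∧ q'.IsPath ∧ p'.InternallyDisjoint q' := by
  have hyu : y ≠ u := fun h => hur (h ▸ r.end_mem_support)
  have hr_p : ∀ z ∈ r.support, z ∈ p.support → z = v := by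
    intro z hzr hzp
    obtain rfl := hrp z hzr hzp
    exact (hpq z hzp hy).resolve_left hyu
  refine ⟨r.append (q.dropUntil y hy), cons hadj p,
    hr.append_of_support_inter (hq.dropUntil hy) fun z hzr hzd =>
      hrq z hzr (q.support_dropUntil_subset_support hy hzd),
    cons_isPath_iff _ _ |>.mpr ⟨hp, fun ht => htv (hr_p t r.start_mem_support ht)⟩, ?_⟩
  intro z hz hz'
  rw [support_cons, List.mem_cons] at hz'
  rcases hz' with rfl | hzp
  · exact Or.inl rfl
  rw [mem_support_append_iff] at hz
  rcases hz with hzr | hzd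
  · exact Or.inr (hr_p z hzr hzp)
  · exact Or.inr (hpq.eq_of_mem_dropUntil hq hy hyu hzd hzp)

lemma InternallyDisjoint.exists_isPath_mem_support_of_isPath_to_support {u v w y : V}
    {p q : G.Walk u v} (hpq : p.InternallyDisjoint q) (hp : p.IsPath) (hq : q.IsPath)
    {r : G.Walk w y} (hr : r.IsPath) (hur : u ∉ r.support) (hy : y ∈ p.support)
    (hrp : ∀ z ∈ r.support, z ∈ p.support → z = y)
    (hrq : ∀ z ∈ r.support, z ∈ q.support → z = y) :
    ∃ s : G.Walk u w, s.IsPath ∧ v ∈ s.support := by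
  have hyu : y ≠ u := fun h => hur (h ▸ r.end_mem_support)
  refine ⟨(q.append (p.dropUntil y hy).reverse).append r.reverse,
    (hpq.isPath_append_reverse_dropUntil hp hq hy hyu).append_of_support_inter hr.reverse ?_,
    mem_support_append_iff _ _ |>.mpr <| .inl <| mem_support_append_iff _ _ |>.mpr <|
      .inl q.end_mem_support⟩
  intro z hz hzr
  rw [support_reverse, List.mem_reverse] at hzr
  rw [mem_support_append_iff, support_reverse, List.mem_reverse] at hz
  rcases hz with hzq | hzd
  · exact hrq z hzr hzq
  · exact hrp z hzr (p.support_dropUntil_subset_support hy hzd)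

end Walk

lemma Walk.IsPath.exists_isPath_first_mem {a b : V} {p : G.Walk a b} (hp : p.IsPath)
    (S : Set V) (hb : b ∈ S) :
    ∃ y ∈ S, ∃ r : G.Walk a y, r.IsPath ∧ r.support ⊆ p.support ∧
      ∀ z ∈ r.support, z ∈ S → z = y := by
  classical
  induction p with
  | nil => exact ⟨_, hb, .nil, .nil, by simp, by simp⟩
  | @cons a c b hadj q ih =>
    rw [Walk.cons_isPath_iff] at hp
    by_cases haS : a ∈ S
    · exact ⟨a, haS, .nil, .nil, by simp, by simp⟩
    obtain ⟨y, hyS, r, hr, hrq, hrS⟩ := ih hp.1 hb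
    refine ⟨y, hyS, .cons hadj r,
      Walk.cons_isPath_iff _ _ |>.mpr ⟨hr, fun h => hp.2 (hrq h)⟩,
      List.cons_subset_cons _ hrq, ?_⟩
    rintro z hz hzS
    rw [Walk.support_cons, List.mem_cons] at hz
    rcases hz with rfl | hz
    · exact absurd hzS haS
    · exact hrS z hz hzS

lemma exists_isPath_notMem_support
    (h2 : ∀ v : V, ((⊤ : G.Subgraph).deleteVerts {v}).coe.Connected)
    {x a b : V} (ha : a ≠ x) (hb : b ≠ x) :
    ∃ p : G.Walk a b, p.IsPath ∧ x ∉ p.support := by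
  classical
  obtain ⟨w⟩ := (h2 x).preconnected ⟨a, by simp [ha]⟩ ⟨b, by simp [hb]⟩
  set w' := w.map ((⊤ : G.Subgraph).deleteVerts {x}).hom
  have hx : x ∉ w'.support := by
    simp only [w', Walk.support_map, List.mem_map, not_exists, not_and]
    intro z _ hz
    simpa [← hz] using z.2
  exact ⟨w'.bypass, w'.bypass_isPath, fun h => hx (w'.support_bypass_subset_support h)⟩

lemma exists_isPath_to_set_notMem_support
    (h2 : ∀ v : V, ((⊤ : G.Subgraph).deleteVerts {v}).coe.Connected)
    {S : Set V} {x a b : V} (ha : a ≠ x) (hbS : b ∈ S) (hb : b ≠ x) :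
    ∃ y ∈ S, ∃ r : G.Walk a y, r.IsPath ∧ x ∉ r.support ∧ ∀ z ∈ r.support, z ∈ S → z = y := by
  obtain ⟨p, hp, hxp⟩ := exists_isPath_notMem_support h2 ha hb
  obtain ⟨y, hyS, r, hr, hrp, hrS⟩ := hp.exists_isPath_first_mem S hbS
  exact ⟨y, hyS, r, hr, fun h => hxp (hrp h), hrS⟩

lemma exists_internallyDisjoint_isPath
    (h2 : ∀ v : V, ((⊤ : G.Subgraph).deleteVerts {v}).coe.Connected)
    {u v : V} (p : G.Walk u v) (huv : u ≠ v) :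
    ∃ P Q : G.Walk u v, P.IsPath ∧ Q.IsPath ∧ P.InternallyDisjoint Q := by
  classical
  induction p with
  | nil => exact absurd rfl huv
  | @cons t u v hadj q ih =>
    by_cases huv' : u = v
    · subst huv'
      have hpath : (Walk.cons hadj .nil).IsPath := by simp [hadj.ne]
      exact ⟨_, _, hpath, hpath, fun z hz _ => by simpa using hz⟩
    obtain ⟨P, Q, hP, hQ, hPQ⟩ := ih huv'
    obtain ⟨y, hy, r, hr, hur, hrS⟩ := exists_isPath_to_set_notMem_support h2
      (S := {z | z ∈ P.support ∨ z ∈ Q.support}) hadj.ne (.inl P.end_mem_support) (Ne.symm huv')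
    have hrP : ∀ z ∈ r.support, z ∈ P.support → z = y := fun z hz h => hrS z hz (.inl h)
    have hrQ : ∀ z ∈ r.support, z ∈ Q.support → z = y := fun z hz h => hrS z hz (.inr h)
    rcases hy with hyP | hyQ
    · exact hPQ.symm.exists_cons_of_isPath_to_support hQ hP hadj huv hr hur hyP hrQ hrP
    · exact hPQ.exists_cons_of_isPath_to_support hP hQ hadj huv hr hur hyQ hrP hrQ

lemma exists_isPath_mem_support
    (h2 : ∀ v : V, ((⊤ : G.Subgraph).deleteVerts {v}).coe.Connected)
    (hG : G.Connected) {u w : V} (huw : u ≠ w) (v : V) :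
    ∃ p : G.Walk u w, p.IsPath ∧ v ∈ p.support := by
  classical
  by_cases hvu : v = u
  · subst hvu
    exact ⟨(hG v w).some.bypass, Walk.bypass_isPath _, Walk.start_mem_support _⟩
  by_cases hvw : v = w
  · subst hvw
    exact ⟨(hG u v).some.bypass, Walk.bypass_isPath _, Walk.end_mem_support _⟩
  obtain ⟨P, Q, hP, hQ, hPQ⟩ := exists_internallyDisjoint_isPath h2 (hG u v).some (Ne.symm hvu)
  obtain ⟨y, hy, r, hr, hur, hrS⟩ := exists_isPath_to_set_notMem_support h2
    (S := {z | z ∈ P.support ∨ z ∈ Q.support}) (Ne.symm huw) (.inl P.end_mem_support) hvu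
  have hrP : ∀ z ∈ r.support, z ∈ P.support → z = y := fun z hz h => hrS z hz (.inl h)
  have hrQ : ∀ z ∈ r.support, z ∈ Q.support → z = y := fun z hz h => hrS z hz (.inr h)
  rcases hy with hyP | hyQ
  · exact hPQ.exists_isPath_mem_support_of_isPath_to_support hP hQ hr hur hyP hrP hrQ
  · exact hPQ.symm.exists_isPath_mem_support_of_isPath_to_support hQ hP hr hur hyQ hrQ hrP

end SimpleGraph

section

variable {V : Type*} {G : SimpleGraph V}

lemma TwoConnected.connected [Fintype V] (h : TwoConnected G) : G.Connected := by
  classical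
  have : Nonempty V := Fintype.card_pos_iff.mp (by have := h.1; omega)
  refine (connected_iff G).mpr ⟨fun a b => ?_, this⟩
  have hab : ({a, b} : Finset V).card < (Finset.univ : Finset V).card :=
    (Finset.card_le_two).trans_lt (by rw [Finset.card_univ]; have := h.1; omega)
  obtain ⟨x, -, hx⟩ := Finset.exists_mem_notMem_of_card_lt_card hab
  simp only [Finset.mem_insert, Finset.mem_singleton, not_or] at hx
  obtain ⟨p, -⟩ := exists_isPath_notMem_support h.2 (Ne.symm hx.1) (Ne.symm hx.2)
  exact ⟨p⟩

lemma Walk.conflictFree_of_mem_support {α : Type*} [DecidableEq α] {C : V → α} {v : V}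
    (hv : ∀ x, C x = C v → x = v) {a b : V} {p : G.Walk a b} (hp : p.IsPath)
    (hvp : v ∈ p.support) : Walk.ConflictFree C p := by
  classical
  refine ⟨C v, ?_⟩
  rw [← List.count_eq_one_of_mem hp.support_nodup hvp, List.count]
  refine List.countP_congr fun x _ => ?_
  simpa using ⟨hv x, fun h => h ▸ rfl⟩

lemma cfvConnected_of_forall_exists_isPath_mem_support {α : Type*} [DecidableEq α]
    {C : V → α} {v : V} (hv : ∀ x, C x = C v → x = v)
    (h : ∀ a b, a ≠ b → ∃ p : G.Walk a b, p.IsPath ∧ v ∈ p.support) : CFVConnected G C := by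
  intro a b
  rcases eq_or_ne a b with rfl | hab
  · exact ⟨.nil, .nil, C a, by simp⟩
  obtain ⟨p, hp, hvp⟩ := h a b hab
  exact ⟨p, hp, Walk.conflictFree_of_mem_support hv hp hvp⟩

lemma two_le_of_cfvConnected [Nontrivial V] {k : ℕ} {C : V → Fin k} (hC : CFVConnected G C) :
    2 ≤ k := by
  obtain ⟨a, b, hab⟩ := exists_pair_ne V
  obtain ⟨p, -, c, hc⟩ := hC a b
  match k, C, c with
  | 0, _, c => exact c.elim0
  | 1, C, c =>
    rw [List.countP_eq_length.mpr fun x _ => by simp [Subsingleton.elim (C x) c],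
      Walk.length_support] at hc
    exact absurd (Walk.eq_of_length_eq_zero (by omega : p.length = 0)) hab
  | k + 2, _, _ => omega

lemma vcfc_eq_two_of_cfvConnected [Nontrivial V] {C : V → Fin 2} (hC : CFVConnected G C) :
    vcfc G = 2 :=
  le_antisymm (Nat.sInf_le ⟨C, hC⟩)
    (le_csInf ⟨2, C, hC⟩ fun _ ⟨_, hC'⟩ => two_le_of_cfvConnected hC')

end

theorem vcfc_eq_two_of_twoConnected {V : Type*} [Fintype V] (G : SimpleGraph V)
    (h : TwoConnected G) : vcfc G = 2 := by
  classical
  have : Nontrivial V := Fintype.one_lt_card_iff_nontrivial.mp (by have := h.1; omega)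
  obtain ⟨v⟩ : Nonempty V := inferInstance
  let C : V → Fin 2 := fun x => if x = v then 0 else 1
  have hv : ∀ x, C x = C v → x = v := fun x => by by_cases hx : x = v <;> simp [C, hx]
  exact vcfc_eq_two_of_cfvConnected <| cfvConnected_of_forall_exists_isPath_mem_support hv
    fun a b hab => exists_isPath_mem_support h.2 h.connected hab v
end

section
/- Let G be the t-corona of a cycle C_n with t ≥ 1 and n ≥ 3. Then vcfc(G) = 3. -/
open SimpleGraph

/-- The t-corona of a graph `H`: attach `t` pendant leaves to each vertex of `H`. -/
def corona {α : Type*} (H : SimpleGraph α) (t : ℕ) : SimpleGraph (α ⊕ α × Fin t) :=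
  SimpleGraph.fromRel (fun x y =>
    match x, y with
    | Sum.inl a, Sum.inl b => H.Adj a b
    | Sum.inl a, Sum.inr (b, _) => a = b
    | _, _ => False)

/-!
A leaf is joined to its base vertex only by the pendant edge, so a conflict-free coloring gives
them different colors. With at most two colors, two cycle vertices of the same color (there are
`n ≥ 3` of them) force their leaves to share the other color, and then every color on a path
between these two leaves appears at least twice; hence at least three colors are needed.

Conversely, color every leaf `1`, the cycle vertex `0` with `2` and all other cycle vertices `0`.
Any two distinct cycle vertices are joined by one of the two arcs passing through `0`, on which
`2` occurs once. A path ending at a leaf has that leaf as its only vertex of color `1`, and two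
leaves at the same base vertex are joined through it, the only vertex of color `≠ 1` there.
-/

lemma List.countP_eq_one_iff_of_nodup {α : Type*} {l : List α} (hl : l.Nodup) {q : α → Bool} :
    l.countP q = 1 ↔ ∃ x ∈ l, q x ∧ ∀ y ∈ l, q y → y = x := by
  classical
  rw [List.countP_eq_length_filter, ← List.toFinset_card_of_nodup (hl.filter q),
    Finset.card_eq_one]
  simp only [Finset.eq_singleton_iff_unique_mem, List.mem_toFinset, List.mem_filter]
  aesop

lemma Fin.eq_or_eq_of_ne_of_le_two {k : ℕ} (hk : k ≤ 2) {a b : Fin k} (hab : a ≠ b) (c : Fin k) :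
    c = a ∨ c = b := by
  simp only [Fin.ext_iff, ne_eq] at hab ⊢
  omega

lemma Fin.val_neg_of_ne_zero {n : ℕ} [NeZero n] {a : Fin n} (ha : a ≠ 0) :
    ((-a : Fin n) : ℕ) = n - a := by
  rw [Fin.val_neg', Nat.mod_eq_of_lt]
  have := Fin.pos_iff_ne_zero.2 ha
  omega

namespace SimpleGraph

section ConflictFree

variable {V α : Type*} [DecidableEq α] {G : SimpleGraph V} {C : V → α} {u v w : V}

lemma Walk.IsPath.conflictFree_iff {p : G.Walk u v} (hp : p.IsPath) :
    Walk.ConflictFree C p ↔ ∃ x ∈ p.support, ∀ y ∈ p.support, C y = C x → y = x := by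
  simp only [Walk.ConflictFree, List.countP_eq_one_iff_of_nodup hp.support_nodup,
    decide_eq_true_eq]
  exact ⟨fun ⟨_, x, hx, rfl, h⟩ => ⟨x, hx, h⟩, fun ⟨x, hx, h⟩ => ⟨C x, x, hx, rfl, h⟩⟩

lemma Walk.IsPath.not_conflictFree_of_forall_exists_ne {p : G.Walk u v} (hp : p.IsPath)
    (h : ∀ x ∈ p.support, ∃ y ∈ p.support, y ≠ x ∧ C y = C x) : ¬ Walk.ConflictFree C p := by
  rw [hp.conflictFree_iff]
  rintro ⟨x, hx, hunique⟩
  obtain ⟨y, hy, hyx, hcol⟩ := h x hx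
  exact hyx (hunique y hy hcol)

lemma Walk.conflictFree_nil (C : V → α) (u : V) : Walk.ConflictFree C (nil : G.Walk u u) :=
  IsPath.nil.conflictFree_iff.2 ⟨u, by simp⟩

lemma exists_conflictFree_path_comm (h : ∃ p : G.Walk u v, p.IsPath ∧ Walk.ConflictFree C p) :
    ∃ p : G.Walk v u, p.IsPath ∧ Walk.ConflictFree C p := by
  obtain ⟨p, hp, c, hc⟩ := h
  exact ⟨p.reverse, hp.reverse, c, by rwa [Walk.support_reverse, List.countP_reverse]⟩

end ConflictFree

lemma Walk.IsPath.append_reverse {V : Type*} {G : SimpleGraph V} {u v w : V} {p : G.Walk u w}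
    {q : G.Walk v w} (hp : p.IsPath) (hq : q.IsPath)
    (h : ∀ x ∈ p.support, x ∈ q.support → x = w) : (p.append q.reverse).IsPath := by
  have hq' := hq.reverse.support_nodup
  rw [← q.reverse.cons_tail_support, List.nodup_cons] at hq'
  rw [isPath_def, support_append, List.nodup_append]
  refine ⟨hp.support_nodup, hq'.2, fun x hx y hy hxy => hq'.1 ?_⟩
  subst hxy
  exact h x hx (by simpa using List.mem_of_mem_tail hy) ▸ hy

def IsPathHub {V : Type*} (H : SimpleGraph V) (z : V) : Prop :=
  ∀ u v : V, u ≠ v → ∃ p : H.Walk u v, p.IsPath ∧ z ∈ p.support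

section Cycle

variable {n : ℕ} [NeZero n]

def cycleGraph.negIso : cycleGraph n ≃g cycleGraph n where
  toEquiv := Equiv.neg (Fin n)
  map_rel_iff' {a b} := by
    simp only [Equiv.neg_apply]
    rw [cycleGraph_adj', cycleGraph_adj', neg_sub_neg, neg_sub_neg, or_comm]

lemma cycleGraph.exists_isPath_to_zero_le (a : Fin n) :
    ∃ p : (cycleGraph n).Walk a 0, p.IsPath ∧ ∀ x ∈ p.support, x ≤ a := by
  obtain ⟨m, hm⟩ := a
  induction m with
  | zero => exact ⟨.nil, .nil, by simp⟩
  | succ m ih =>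
    obtain ⟨p, hp, hle⟩ := ih (by omega)
    have hadj : (cycleGraph n).Adj ⟨m + 1, hm⟩ ⟨m, by omega⟩ := by
      rw [cycleGraph_adj', Fin.sub_val_of_le (by simp)]
      simp
    refine ⟨.cons hadj p, hp.cons fun h => by simpa [Fin.le_def] using hle _ h, ?_⟩
    simp only [Walk.support_cons, List.mem_cons, forall_eq_or_imp, le_refl, true_and]
    exact fun x hx => (hle x hx).trans (by simp [Fin.le_def])

/-- The path `a, a + 1, …, n - 1, 0`, obtained by reflecting the path `-a, -a - 1, …, 0`. -/
lemma cycleGraph.exists_isPath_to_zero_ge {a : Fin n} (ha : a ≠ 0) :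
    ∃ p : (cycleGraph n).Walk a 0, p.IsPath ∧ ∀ x ∈ p.support, x = 0 ∨ a ≤ x := by
  obtain ⟨p, hp, hle⟩ := exists_isPath_to_zero_le (-a)
  let q := p.map negIso.toHom
  have hq : ∀ x ∈ q.support, x = 0 ∨ a ≤ x := by
    rw [Walk.support_map, List.forall_mem_map]
    intro y hy
    rcases eq_or_ne y 0 with rfl | hy0
    · exact .inl neg_zero
    · have hya := hle y hy
      rw [Fin.le_def, Fin.val_neg_of_ne_zero ha] at hya
      right
      change (a : ℕ) ≤ ((-y : Fin n) : ℕ)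
      rw [Fin.val_neg_of_ne_zero hy0]
      omega
  refine ⟨q.copy (show negIso.toHom (-a) = a from neg_neg a)
    (show negIso.toHom 0 = 0 from neg_zero), ?_, ?_⟩
  · rw [Walk.isPath_copy]
    exact hp.map (f := negIso.toHom) neg_injective
  · rwa [Walk.support_copy]

lemma cycleGraph.isPathHub_zero : (cycleGraph n).IsPathHub 0 := by
  intro a b hab
  wlog hlt : a < b generalizing a b
  · obtain ⟨p, hp, h0⟩ := this b a hab.symm (lt_of_le_of_ne (not_lt.1 hlt) hab.symm)
    exact ⟨p.reverse, hp.reverse, by simpa using h0⟩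
  obtain ⟨p, hp, hpa⟩ := exists_isPath_to_zero_le a
  obtain ⟨q, hq, hqb⟩ := exists_isPath_to_zero_ge (a := b) (ne_bot_of_gt hlt)
  refine ⟨p.append q.reverse, hp.append_reverse hq fun x hxp hxq => ?_, by simp⟩
  exact (hqb x hxq).resolve_right fun hbx => (hpa x hxp).not_gt (hlt.trans_le hbx)

end Cycle

section Corona

variable {V : Type*} {H : SimpleGraph V} {t : ℕ}

@[simp]
lemma corona_adj_inl_inl {a b : V} : (corona H t).Adj (.inl a) (.inl b) ↔ H.Adj a b := by
  simp only [corona, fromRel_adj, ne_eq, Sum.inl.injEq]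
  exact ⟨fun h => h.2.elim id H.adj_symm, fun h => ⟨h.ne, .inl h⟩⟩

@[simp]
lemma corona_adj_inl_inr {a b : V} {s : Fin t} :
    (corona H t).Adj (.inl a) (.inr (b, s)) ↔ a = b := by
  simp [corona, fromRel_adj]

lemma corona_adj_inl_inr_self (a : V) (s : Fin t) : (corona H t).Adj (.inl a) (.inr (a, s)) :=
  corona_adj_inl_inr.2 rfl

lemma corona_adj_inr {a : V} {s : Fin t} {w : V ⊕ V × Fin t} :
    (corona H t).Adj (.inr (a, s)) w ↔ w = .inl a := by
  rcases w with b | ⟨b, r⟩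
  · simp [corona, fromRel_adj, eq_comm]
  · simp [corona, fromRel_adj]

def coronaBaseEmbedding (H : SimpleGraph V) (t : ℕ) : H ↪g corona H t where
  toEmbedding := .inl
  map_rel_iff' := corona_adj_inl_inl

lemma corona_inl_mem_support_of_inr {a : V} {s : Fin t} {v : V ⊕ V × Fin t}
    (p : (corona H t).Walk (.inr (a, s)) v) (hv : v ≠ .inr (a, s)) : .inl a ∈ p.support := by
  cases p with
  | nil => exact absurd rfl hv
  | cons h q =>
    obtain rfl := corona_adj_inr.1 h
    simp

lemma IsPathHub.exists_isPath_corona {z : V} (hz : H.IsPathHub z) (u v : V) :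
    ∃ p : (corona H t).Walk (.inl u) (.inl v),
      p.IsPath ∧ (∀ x ∈ p.support, x.isLeft) ∧ (u ≠ v → .inl z ∈ p.support) := by
  rcases eq_or_ne u v with rfl | huv
  · exact ⟨.nil, .nil, by simp, fun h => absurd rfl h⟩
  obtain ⟨p, hp, hzp⟩ := hz u v huv
  let q := p.map (coronaBaseEmbedding H t).toHom
  have hq : q.support = p.support.map Sum.inl := Walk.support_map _ _
  have hleft : ∀ x ∈ q.support, x.isLeft := by simp [hq]
  have hzq : .inl z ∈ q.support := by simpa [hq] using hzp
  exact ⟨q, hp.map Sum.inl_injective, hleft, fun _ => hzq⟩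

end Corona

section CoronaColoring

variable {V : Type*} [DecidableEq V] {H : SimpleGraph V} {t : ℕ} {z : V}

def coronaColoring (z : V) : V ⊕ V × Fin t → Fin 3 :=
  Sum.elim (fun v => if v = z then 2 else 0) fun _ => 1

lemma coronaColoring_eq_two_iff {x : V ⊕ V × Fin t} : coronaColoring z x = 2 ↔ x = .inl z := by
  rcases x with v | _ <;> simp [coronaColoring]

lemma coronaColoring_inl_ne_one (v : V) : coronaColoring (t := t) z (.inl v) ≠ 1 := by
  simp only [coronaColoring, Sum.elim_inl]
  split_ifs <;> decide

lemma conflictFree_coronaColoring_of_inl_mem {u v : V ⊕ V × Fin t} {p : (corona H t).Walk u v}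
    (hp : p.IsPath) (hz : .inl z ∈ p.support) : Walk.ConflictFree (coronaColoring z) p :=
  hp.conflictFree_iff.2 ⟨_, hz, fun _ _ h =>
    coronaColoring_eq_two_iff.1 (h.trans (coronaColoring_eq_two_iff.2 rfl))⟩

lemma IsPathHub.exists_conflictFree_path_corona_inl_inr (hz : H.IsPathHub z) (u v : V)
    (r : Fin t) : ∃ p : (corona H t).Walk (.inl u) (.inr (v, r)),
      p.IsPath ∧ Walk.ConflictFree (coronaColoring z) p := by
  obtain ⟨q, hq, hleft, -⟩ := hz.exists_isPath_corona (t := t) u v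
  have hp := hq.concat (fun h => by simpa using hleft _ h) (corona_adj_inl_inr_self v r)
  refine ⟨_, hp, hp.conflictFree_iff.2 ⟨.inr (v, r), by simp, fun x hx hcol => ?_⟩⟩
  rw [Walk.support_concat, List.mem_append, List.mem_singleton] at hx
  rcases hx with hx | rfl
  · obtain ⟨w, rfl⟩ := Sum.isLeft_iff.1 (hleft x hx)
    exact absurd hcol (coronaColoring_inl_ne_one w)
  · rfl

lemma IsPathHub.exists_conflictFree_path_corona_inr_inr (hz : H.IsPathHub z) {u v : V}
    (huv : u ≠ v) (s r : Fin t) : ∃ p : (corona H t).Walk (.inr (u, s)) (.inr (v, r)),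
      p.IsPath ∧ Walk.ConflictFree (coronaColoring z) p := by
  obtain ⟨q, hq, hleft, hzq⟩ := hz.exists_isPath_corona (t := t) u v
  have hq' := hq.concat (fun h => by simpa using hleft _ h) (corona_adj_inl_inr_self v r)
  have hp := hq'.cons (u := .inr (u, s)) (h := (corona_adj_inl_inr_self u s).symm) (by
    rw [Walk.support_concat, List.mem_append, List.mem_singleton, not_or]
    exact ⟨fun h => by simpa using hleft _ h, by simp [huv]⟩)
  exact ⟨_, hp, conflictFree_coronaColoring_of_inl_mem hp (by simp [hzq huv])⟩

lemma exists_conflictFree_path_corona_inr_inr_self {u : V} {s r : Fin t} (hsr : s ≠ r) :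
    ∃ p : (corona H t).Walk (.inr (u, s)) (.inr (u, r)),
      p.IsPath ∧ Walk.ConflictFree (coronaColoring z) p := by
  let p : (corona H t).Walk (.inr (u, s)) (.inr (u, r)) :=
    .cons (corona_adj_inl_inr_self u s).symm (.cons (corona_adj_inl_inr_self u r) .nil)
  have hp : p.IsPath := by simp [p, hsr]
  refine ⟨p, hp, hp.conflictFree_iff.2 ⟨.inl u, by simp [p], fun x hx hcol => ?_⟩⟩
  simp only [p, Walk.support_cons, Walk.support_nil, List.mem_cons, List.not_mem_nil,
    or_false] at hx
  rcases hx with rfl | rfl | rfl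
  all_goals first | rfl | exact absurd hcol.symm (coronaColoring_inl_ne_one u)

lemma IsPathHub.cfvConnected_corona_coronaColoring (hz : H.IsPathHub z) :
    CFVConnected (corona H t) (coronaColoring z) := by
  intro x y
  rcases eq_or_ne x y with rfl | hxy
  · exact ⟨.nil, .nil, Walk.conflictFree_nil _ _⟩
  rcases x with u | ⟨u, s⟩ <;> rcases y with v | ⟨v, r⟩
  · obtain ⟨p, hp, -, hzp⟩ := hz.exists_isPath_corona (t := t) u v
    exact ⟨p, hp, conflictFree_coronaColoring_of_inl_mem hp (hzp (by simpa using hxy))⟩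
  · exact hz.exists_conflictFree_path_corona_inl_inr u v r
  · exact exists_conflictFree_path_comm (hz.exists_conflictFree_path_corona_inl_inr v u s)
  · rcases eq_or_ne u v with rfl | huv
    · exact exists_conflictFree_path_corona_inr_inr_self (by simpa using hxy)
    · exact hz.exists_conflictFree_path_corona_inr_inr huv s r

end CoronaColoring

end SimpleGraph

namespace CFVConnected

variable {V : Type*} {H : SimpleGraph V} {t k : ℕ} {C : V ⊕ V × Fin t → Fin k}

lemma corona_color_inr_ne (hC : CFVConnected (corona H t) C) (a : V) (s : Fin t) :
    C (.inr (a, s)) ≠ C (.inl a) := by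
  intro heq
  obtain ⟨p, hp, hcf⟩ := hC (.inr (a, s)) (.inl a)
  cases p with
  | cons h q =>
    obtain rfl := corona_adj_inr.1 h
    obtain rfl := (Walk.isPath_iff_nil.1 hp.of_cons).eq_nil
    refine hp.not_conflictFree_of_forall_exists_ne (fun x hx => ?_) hcf
    simp only [Walk.support_cons, Walk.support_nil, List.mem_cons, List.not_mem_nil,
      or_false] at hx
    rcases hx with rfl | rfl
    · exact ⟨.inl a, by simp, Sum.inl_ne_inr, heq.symm⟩
    · exact ⟨.inr (a, s), by simp, Sum.inr_ne_inl, heq⟩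

lemma corona_injective (ht : 0 < t) (hk : k ≤ 2) (hC : CFVConnected (corona H t) C) :
    Function.Injective (C ∘ Sum.inl) := by
  intro a b (hab : C (.inl a) = C (.inl b))
  by_contra hne
  let s : Fin t := ⟨0, ht⟩
  obtain ⟨p, hp, hcf⟩ := hC (.inr (a, s)) (.inr (b, s))
  have hleaf : C (.inr (a, s)) ≠ C (.inl a) := hC.corona_color_inr_ne a s
  have hleaves : C (.inr (b, s)) = C (.inr (a, s)) :=
    (Fin.eq_or_eq_of_ne_of_le_two hk hleaf _).resolve_right (hab ▸ hC.corona_color_inr_ne b s)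
  have ha : .inl a ∈ p.support := corona_inl_mem_support_of_inr p (by simp [Ne.symm hne])
  have hb : .inl b ∈ p.support := by
    simpa using corona_inl_mem_support_of_inr p.reverse (by simp [hne])
  refine hp.not_conflictFree_of_forall_exists_ne (fun x hx => ?_) hcf
  rcases Fin.eq_or_eq_of_ne_of_le_two hk hleaf (C x) with hx' | hx'
  · by_cases hxa : x = .inr (a, s)
    · exact ⟨.inr (b, s), p.end_mem_support, by simp [hxa, Ne.symm hne], by rw [hleaves, hxa]⟩
    · exact ⟨.inr (a, s), p.start_mem_support, Ne.symm hxa, hx'.symm⟩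
  · by_cases hxa : x = .inl a
    · exact ⟨.inl b, hb, by simp [hxa, Ne.symm hne], by rw [hxa]; exact hab.symm⟩
    · exact ⟨.inl a, ha, Ne.symm hxa, hx'.symm⟩

end CFVConnected

theorem vcfc_corona_cycle (n t : ℕ) (hn : 3 ≤ n) (ht : 1 ≤ t) :
    vcfc (corona (SimpleGraph.cycleGraph n) t) = 3 := by
  have : NeZero n := ⟨by omega⟩
  have h3 : 3 ∈ {k : ℕ | ∃ C : Fin n ⊕ Fin n × Fin t → Fin k,
      CFVConnected (corona (cycleGraph n) t) C} :=
    ⟨coronaColoring 0, cycleGraph.isPathHub_zero.cfvConnected_corona_coronaColoring⟩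
  refine le_antisymm (Nat.sInf_le h3) (le_csInf ⟨3, h3⟩ ?_)
  rintro k ⟨C, hC⟩
  by_contra! hk
  have := Fintype.card_le_of_injective _ (hC.corona_injective ht (by omega))
  simp only [Fintype.card_fin] at this
  omega
end

section
/- Let T be a tree of order n ≥ 3 with diameter d(T). Then max{χ(T), ⌈log₂(d(T)+1)⌉} ≤ vcfc(T) ≤ log_{3/2} n. -/
open SimpleGraph

/-
Lower bounds. A tree is bipartite, and a conflict-free colouring of a graph with two vertices uses
two colours. Along a path of a tree coloured conflict-free, the colour occurring exactly once splits
the path into two subpaths avoiding that colour; these are again conflict-free, because paths in a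
tree are unique, so a path seen by `k` colours has fewer than `2 ^ k` vertices. Applied to a
diametral path this gives `d(T) + 1 < 2 ^ vcfc(T)`.

Upper bound. A vertex ranking, in which two vertices of equal rank are separated on every path by a
vertex of higher rank, is conflict-free: the maximal rank on a path occurs only once. Removing a
centroid from every component of a forest at least halves the components, so giving the centroids
the top rank and recursing ranks a tree on `n` vertices with `⌊log₂ n⌋ + 1` ranks, and
`⌊log₂ n⌋ + 1 ≤ log_{3/2} n` for `n ≥ 3`.
-/

open SimpleGraph.Walk

theorem List.length_lt_two_pow_of_forall_infix {α β : Type*} [DecidableEq β] (C : α → β)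
    (S : Finset β) (l : List α) (hS : ∀ x ∈ l, C x ∈ S)
    (hl : ∀ l', l' <:+: l → l' ≠ [] → ∃ c, l'.countP (fun x => decide (C x = c)) = 1) :
    l.length < 2 ^ S.card := by
  induction S using Finset.strongInduction generalizing l with
  | H S ih =>
  rcases eq_or_ne l [] with rfl | hne
  · simp
  obtain ⟨c, hc⟩ := hl l (List.infix_refl l) hne
  obtain ⟨x, hxl, hxc⟩ := List.countP_pos_iff.1 (hc ▸ Nat.one_pos)
  obtain ⟨s, t, rfl⟩ := List.append_of_mem hxl
  simp only [decide_eq_true_eq] at hxc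
  have hcS : c ∈ S := hxc ▸ hS x (by simp)
  have hst : s.countP (fun x => decide (C x = c)) = 0 ∧
      t.countP (fun x => decide (C x = c)) = 0 := by
    simp only [List.countP_append, List.countP_cons, hxc, decide_true, if_true] at hc
    omega
  have bound : ∀ l', l' <:+: s ++ x :: t → l'.countP (fun x => decide (C x = c)) = 0 →
      l'.length < 2 ^ (S.card - 1) := by
    intro l' hl' hc'
    rw [← Finset.card_erase_of_mem hcS]
    refine ih _ (Finset.erase_ssubset hcS) l' (fun y hy => ?_)
      (fun l'' hl'' => hl l'' (hl''.trans hl'))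
    refine Finset.mem_erase.2 ⟨fun hyc => ?_, hS y (hl'.subset hy)⟩
    exact (List.countP_eq_zero.1 hc' y hy) (by simpa using hyc)
  have hs := bound s ⟨[], x :: t, by simp⟩ hst.1
  have ht := bound t ⟨s ++ [x], [], by simp⟩ hst.2
  have hpow : 2 ^ S.card = 2 * 2 ^ (S.card - 1) := by
    rw [← pow_succ']; congr 1; have := Finset.card_pos.2 ⟨c, hcS⟩; omega
  simp only [List.length_append, List.length_cons]
  omega

namespace SimpleGraph

variable {V : Type*} {G : SimpleGraph V} {s t : Finset V} {x y z : V}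

theorem Walk.exists_support_eq_of_infix {u v : V} (p : G.Walk u v) {l : List V}
    (hl : l <:+: p.support) (hne : l ≠ []) : ∃ (a b : V) (q : G.Walk a b), q.support = l := by
  obtain ⟨s, t, hst⟩ := hl
  refine ⟨_, _, (p.drop s.length).take (l.length - 1), ?_⟩
  have hs : s.length ≤ p.length := by
    have h1 := congrArg List.length hst
    have h2 := List.length_pos_iff.2 hne
    simp only [List.length_append, length_support] at h1
    omega
  rw [support_take, drop_support_eq_support_drop_min, min_eq_left hs, ← hst,
    List.append_assoc, List.drop_left, Nat.sub_add_cancel (List.length_pos_iff.2 hne),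
    List.take_left]

theorem IsAcyclic.conflictFree_of_isPath {α : Type*} [DecidableEq α] {C : V → α}
    (hG : G.IsAcyclic) (hC : CFVConnected G C) {u v : V} {p : G.Walk u v} (hp : p.IsPath) :
    _root_.Walk.ConflictFree C p := by
  obtain ⟨q, hq, hcf⟩ := hC u v
  have hpq : p = q := congrArg Subtype.val ((hG.subsingleton_path u v).elim ⟨p, hp⟩ ⟨q, hq⟩)
  rwa [hpq]

theorem IsAcyclic.length_support_lt_two_pow {α : Type*} [Fintype α] [DecidableEq α]
    {C : V → α} (hG : G.IsAcyclic) (hC : CFVConnected G C) {u v : V} {p : G.Walk u v}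
    (hp : p.IsPath) : p.support.length < 2 ^ Fintype.card α := by
  rw [← Finset.card_univ]
  refine List.length_lt_two_pow_of_forall_infix C _ _ (by simp) fun l hl hne => ?_
  obtain ⟨a, b, q, rfl⟩ := p.exists_support_eq_of_infix hl hne
  exact hG.conflictFree_of_isPath hC (IsPath.mk' (hp.support_nodup.sublist hl.sublist))

theorem IsTree.diam_add_one_lt_two_pow [DecidableEq V] {α : Type*} [Fintype α] [DecidableEq α]
    {C : V → α} (hG : G.IsTree) (hC : CFVConnected G C) : G.diam + 1 < 2 ^ Fintype.card α := by
  have := hG.connected.nonempty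
  obtain ⟨u, v, huv⟩ := G.exists_dist_eq_diam
  obtain ⟨w⟩ := hG.connected u v
  have hlt := hG.isAcyclic.length_support_lt_two_pow hC w.bypass_isPath
  have := dist_le w.bypass
  rw [length_support] at hlt
  omega

def ReachableIn (G : SimpleGraph V) (s : Finset V) (x y : V) : Prop :=
  ∃ p : G.Walk x y, ∀ z ∈ p.support, z ∈ s

namespace ReachableIn

theorem refl (hx : x ∈ s) : G.ReachableIn s x x := ⟨nil, by simpa⟩

theorem symm (h : G.ReachableIn s x y) : G.ReachableIn s y x := by
  obtain ⟨p, hp⟩ := h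
  exact ⟨p.reverse, by simpa using hp⟩

theorem trans (h : G.ReachableIn s x y) (h' : G.ReachableIn s y z) : G.ReachableIn s x z := by
  obtain ⟨p, hp⟩ := h
  obtain ⟨q, hq⟩ := h'
  exact ⟨p.append q, fun w hw => (mem_support_append_iff p q).1 hw |>.elim (hp w) (hq w)⟩

theorem mono (h : G.ReachableIn s x y) (hst : s ⊆ t) : G.ReachableIn t x y := by
  obtain ⟨p, hp⟩ := h
  exact ⟨p, fun w hw => hst (hp w hw)⟩

theorem mem_left (h : G.ReachableIn s x y) : x ∈ s := by
  obtain ⟨p, hp⟩ := h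
  exact hp x p.start_mem_support

theorem mem_right (h : G.ReachableIn s x y) : y ∈ s := by
  obtain ⟨p, hp⟩ := h
  exact hp y p.end_mem_support

theorem exists_isPath [DecidableEq V] (h : G.ReachableIn s x y) :
    ∃ p : G.Walk x y, p.IsPath ∧ ∀ z ∈ p.support, z ∈ s := by
  obtain ⟨p, hp⟩ := h
  exact ⟨p.bypass, p.bypass_isPath, fun w hw => hp w (p.support_bypass_subset_support hw)⟩

end ReachableIn

theorem reachableIn_of_mem_support [DecidableEq V] (p : G.Walk x y) (hp : ∀ w ∈ p.support, w ∈ s)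
    (hz : z ∈ p.support) : G.ReachableIn s x z :=
  ⟨p.takeUntil z hz, fun w hw => hp w (p.support_takeUntil_subset_support hz hw)⟩

open Classical in
/-- The vertices of the component of `x` in the subgraph induced by `s`; empty if `x ∉ s`. -/
noncomputable def componentIn (G : SimpleGraph V) (s : Finset V) (x : V) : Finset V :=
  {y ∈ s | G.ReachableIn s x y}

theorem mem_componentIn : y ∈ G.componentIn s x ↔ G.ReachableIn s x y := by
  classical
  simpa [componentIn] using fun h => h.mem_right

theorem self_mem_componentIn (hx : x ∈ s) : x ∈ G.componentIn s x :=
  mem_componentIn.2 (.refl hx)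

theorem componentIn_subset : G.componentIn s x ⊆ s := fun _ hy => (mem_componentIn.1 hy).mem_right

theorem componentIn_eq (h : G.ReachableIn s x y) : G.componentIn s x = G.componentIn s y := by
  ext z
  simp only [mem_componentIn]
  exact ⟨h.symm.trans, h.trans⟩

theorem componentIn_mono (hts : t ⊆ s) : G.componentIn t x ⊆ G.componentIn s x := fun _ hy =>
  mem_componentIn.2 ((mem_componentIn.1 hy).mono hts)

theorem ReachableIn.reachableIn_componentIn [DecidableEq V] (h : G.ReachableIn s x y) :
    G.ReachableIn (G.componentIn s x) x y := by
  obtain ⟨p, hp⟩ := h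
  exact ⟨p, fun z hz => mem_componentIn.2 (reachableIn_of_mem_support p hp hz)⟩

theorem reachableIn_componentIn_of_mem [DecidableEq V] (hy : y ∈ G.componentIn s x)
    (hz : z ∈ G.componentIn s x) : G.ReachableIn (G.componentIn s x) y z :=
  (mem_componentIn.1 hy).reachableIn_componentIn.symm.trans
    (mem_componentIn.1 hz).reachableIn_componentIn

theorem componentIn_subset_componentIn [DecidableEq V] (h : G.componentIn t x ⊆ s) :
    G.componentIn t x ⊆ G.componentIn s x := fun _ hy =>
  mem_componentIn.2 ((mem_componentIn.1 hy).reachableIn_componentIn.mono h)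

theorem ReachableIn.reachableIn_erase_of_not_reachableIn_erase [DecidableEq V] {c u : V}
    (huc : u ≠ c) (h : G.ReachableIn s y c) (h' : ¬G.ReachableIn (s.erase u) y c) :
    G.ReachableIn (s.erase c) y u := by
  obtain ⟨p, hp, hps⟩ := h.exists_isPath
  have hu : u ∈ p.support := by
    by_contra hu
    exact h' ⟨p, fun w hw => Finset.mem_erase.2 ⟨fun hwu => hu (hwu ▸ hw), hps w hw⟩⟩
  have hc := endpoint_notMem_support_takeUntil hp hu huc.symm
  exact ⟨p.takeUntil u hu, fun w hw => Finset.mem_erase.2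
    ⟨fun hwc => hc (hwc ▸ hw), hps w (p.support_takeUntil_subset_support hu hw)⟩⟩

theorem ReachableIn.exists_adj_reachableIn_erase [DecidableEq V] {c : V} (hcx : c ≠ x)
    (h : G.ReachableIn s c x) : ∃ u, G.Adj c u ∧ G.ReachableIn (s.erase c) u x := by
  obtain ⟨p, hp, hps⟩ := h.exists_isPath
  cases p with
  | nil => exact absurd rfl hcx
  | cons hcu q =>
    rw [cons_isPath_iff] at hp
    exact ⟨_, hcu, q, fun w hw => Finset.mem_erase.2
      ⟨fun hwc => hp.2 (hwc ▸ hw), hps w (List.mem_cons_of_mem _ hw)⟩⟩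

theorem IsAcyclic.not_reachableIn_erase_of_adj [DecidableEq V] (hG : G.IsAcyclic) {c u : V}
    (hcu : G.Adj c u) (hc : G.ReachableIn (s.erase u) c y) (hu : G.ReachableIn (s.erase c) u y) :
    False := by
  obtain ⟨p, hp, hps⟩ := hc.exists_isPath
  obtain ⟨q, hq, hqs⟩ := hu.exists_isPath
  have hcq : c ∉ q.support := fun h => Finset.notMem_erase c s (hqs c h)
  have hpq : p = cons hcu q := congrArg Subtype.val
    ((hG.subsingleton_path c y).elim ⟨p, hp⟩ ⟨cons hcu q, hq.cons hcq⟩)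
  exact Finset.notMem_erase u s (hps u (by simp [hpq]))

def IsCentroid [DecidableEq V] (G : SimpleGraph V) (A : Finset V) (c : V) : Prop :=
  c ∈ A ∧ ∀ x ∈ A.erase c, 2 * (G.componentIn (A.erase c) x).card ≤ A.card

theorem IsAcyclic.card_componentIn_erase_lt [DecidableEq V] (hG : G.IsAcyclic) {A : Finset V}
    (hA : ∀ x ∈ A, ∀ y ∈ A, G.ReachableIn A x y) {c u : V} (hc : c ∈ A) (hcu : G.Adj c u)
    (hu : u ∈ A.erase c) (hbig : A.card < 2 * (G.componentIn (A.erase c) u).card) :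
    ∀ x ∈ A.erase u, (G.componentIn (A.erase u) x).card < (G.componentIn (A.erase c) u).card := by
  set Z := G.componentIn (A.erase c) u
  have hZA : Z ⊆ A := componentIn_subset.trans (Finset.erase_subset c A)
  intro x hx
  by_cases hxc : G.ReachableIn (A.erase u) x c
  · have hsub : G.componentIn (A.erase u) x ⊆ A \ Z := fun y hy => by
      have hxy := mem_componentIn.1 hy
      refine Finset.mem_sdiff.2 ⟨Finset.mem_of_mem_erase hxy.mem_right, fun hyZ => ?_⟩
      exact hG.not_reachableIn_erase_of_adj hcu (hxc.symm.trans hxy) (mem_componentIn.1 hyZ)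
    have := Finset.card_le_card hsub
    rw [Finset.card_sdiff_of_subset hZA] at this
    have := Finset.card_le_card hZA
    omega
  · have hsub : G.componentIn (A.erase u) x ⊆ Z.erase u := fun y hy => by
      have hxy := mem_componentIn.1 hy
      have hyA := hxy.mem_right
      have hyc : ¬G.ReachableIn (A.erase u) y c := fun hyc => hxc (hxy.trans hyc)
      have hyu := (hA y (Finset.mem_of_mem_erase hyA) c hc)
        |>.reachableIn_erase_of_not_reachableIn_erase (Finset.ne_of_mem_erase hu) hyc
      exact Finset.mem_erase.2 ⟨Finset.ne_of_mem_erase hyA, mem_componentIn.2 hyu.symm⟩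
    calc (G.componentIn (A.erase u) x).card ≤ (Z.erase u).card := Finset.card_le_card hsub
      _ < Z.card := Finset.card_erase_lt_of_mem (self_mem_componentIn hu)

theorem IsAcyclic.exists_isCentroid [DecidableEq V] (hG : G.IsAcyclic) {A : Finset V}
    (hA : ∀ x ∈ A, ∀ y ∈ A, G.ReachableIn A x y) (hne : A.Nonempty) : ∃ c, G.IsCentroid A c := by
  obtain ⟨c, hc, hmin⟩ := A.exists_min_image
    (fun c => (A.erase c).sup fun x => (G.componentIn (A.erase c) x).card) hne
  -- `c` minimises the largest component of `A \ {c}`; if one of them, `Z`, had more than half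
  -- the vertices of `A`, the neighbour of `c` in `Z` would do better.
  refine ⟨c, hc, fun a ha => ?_⟩
  by_contra! hbig
  obtain ⟨u, hcu, hua⟩ := (hA c hc a (Finset.mem_of_mem_erase ha)).exists_adj_reachableIn_erase
    (Finset.ne_of_mem_erase ha).symm
  rw [componentIn_eq hua.symm] at hbig
  have hu : u ∈ A.erase c := hua.mem_left
  have hlt : ((A.erase u).sup fun x => (G.componentIn (A.erase u) x).card) <
      (G.componentIn (A.erase c) u).card :=
    (Finset.sup_lt_iff (by rw [bot_eq_zero]; omega)).2
      (hG.card_componentIn_erase_lt hA hc hcu hu hbig)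
  have hle := Finset.le_sup (f := fun x => (G.componentIn (A.erase c) x).card) hu
  have := hmin u (Finset.mem_of_mem_erase hu)
  omega

/-- A vertex ranking of the subgraph induced by `s`. Quantifying over walks rather than paths gives
the same notion, as a walk shortens to a path through a subset of its vertices. -/
def IsRankingOn {α : Type*} [LT α] (G : SimpleGraph V) (s : Finset V) (f : V → α) : Prop :=
  ∀ ⦃u v : V⦄, u ≠ v → f u = f v → ∀ p : G.Walk u v, (∀ z ∈ p.support, z ∈ s) →
    ∃ z ∈ p.support, f u < f z

theorem isRankingOn_empty {α : Type*} [LT α] (f : V → α) : G.IsRankingOn ∅ f :=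
  fun u _ _ _ p hp => absurd (hp u p.start_mem_support) (Finset.notMem_empty u)

theorem IsRankingOn.ite [DecidableEq V] {D : Finset V} {f : V → ℕ} {k : ℕ}
    (hD : ∀ x ∈ D, ∀ y ∈ D, G.ReachableIn s x y → x = y) (hfk : ∀ v ∈ s \ D, f v < k)
    (hf : G.IsRankingOn (s \ D) f) : G.IsRankingOn s fun v => if v ∈ D then k else f v := by
  intro u v huv hfuv p hp
  have hu' := hfk u
  have hv' := hfk v
  simp only [Finset.mem_sdiff, hp u p.start_mem_support, hp v p.end_mem_support, true_and]
    at hu' hv'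
  by_cases hu : u ∈ D <;> by_cases hv : v ∈ D <;> simp only [hu, hv, if_true, if_false] at hfuv
  · exact absurd (hD u hu v hv ⟨p, hp⟩) huv
  · exact absurd hfuv (hv' hv).ne'
  · exact absurd hfuv (hu' hu).ne
  by_cases hz : ∃ z ∈ p.support, z ∈ D
  · obtain ⟨z, hz, hzD⟩ := hz
    exact ⟨z, hz, by simpa [hu, hzD] using hu' hu⟩
  · replace hz : ∀ z ∈ p.support, z ∉ D := fun z hz' hzD => hz ⟨z, hz', hzD⟩
    obtain ⟨z, hz', hlt⟩ := hf huv hfuv p fun z hz' => Finset.mem_sdiff.2 ⟨hp z hz', hz z hz'⟩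
    exact ⟨z, hz', by simpa [hu, hz z hz'] using hlt⟩

theorem IsRankingOn.cfvConnected {α : Type*} [LinearOrder α] [Fintype V]
    [DecidableEq V] {f : V → α} (hf : G.IsRankingOn Finset.univ f) (hG : G.Connected) :
    CFVConnected G f := by
  intro u v
  obtain ⟨w⟩ := hG.preconnected u v
  set p := w.bypass
  obtain ⟨x, hx, hmax⟩ := p.support.toFinset.exists_max_image f ⟨u, by simp⟩
  rw [List.mem_toFinset] at hx
  have hunique : ∀ y ∈ p.support, f y = f x → y = x := by
    intro y hy hyx
    by_contra hyx'
    obtain ⟨z, hz, hlt⟩ := hf hyx' hyx ((p.takeUntil y hy).reverse.append (p.takeUntil x hx))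
      (fun _ _ => Finset.mem_univ _)
    have hzp : z ∈ p.support := by
      rw [mem_support_append_iff, support_reverse, List.mem_reverse] at hz
      exact hz.elim (p.support_takeUntil_subset_support hy ·)
        (p.support_takeUntil_subset_support hx ·)
    exact (hmax z (List.mem_toFinset.2 hzp)).not_gt (hyx ▸ hlt)
  refine ⟨p, w.bypass_isPath, f x, ?_⟩
  rw [← List.count_eq_one_of_mem w.bypass_isPath.support_nodup hx, List.count_eq_countP]
  exact List.countP_congr fun y hy => by simpa using ⟨hunique y hy, fun h => h ▸ rfl⟩

section Centroids

variable [DecidableEq V] [Nonempty V]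

/-- An arbitrary vertex if `A` has no centroid. -/
noncomputable def centroid (G : SimpleGraph V) (A : Finset V) : V :=
  Classical.epsilon (G.IsCentroid A)

/-- The chosen centroid of each component of `s`. -/
noncomputable def centroids (G : SimpleGraph V) (s : Finset V) : Finset V :=
  {x ∈ s | G.centroid (G.componentIn s x) = x}

theorem IsAcyclic.isCentroid_centroid_componentIn (hG : G.IsAcyclic) (hx : x ∈ s) :
    G.IsCentroid (G.componentIn s x) (G.centroid (G.componentIn s x)) :=
  Classical.epsilon_spec <| hG.exists_isCentroid
    (fun _ hy _ hz => reachableIn_componentIn_of_mem hy hz) ⟨x, self_mem_componentIn hx⟩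

theorem IsAcyclic.centroid_mem_centroids (hG : G.IsAcyclic) (hx : x ∈ s) :
    G.centroid (G.componentIn s x) ∈ G.centroids s := by
  have hc := mem_componentIn.1 (hG.isCentroid_centroid_componentIn hx).1
  refine Finset.mem_filter.2 ⟨hc.mem_right, ?_⟩
  rw [← componentIn_eq hc]

theorem eq_of_mem_centroids_of_reachableIn (hx : x ∈ G.centroids s) (hy : y ∈ G.centroids s)
    (h : G.ReachableIn s x y) : x = y := by
  rw [← (Finset.mem_filter.1 hx).2, ← (Finset.mem_filter.1 hy).2, componentIn_eq h]

theorem IsAcyclic.two_mul_card_componentIn_sdiff_centroids_le (hG : G.IsAcyclic)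
    (hx : x ∈ s \ G.centroids s) :
    2 * (G.componentIn (s \ G.centroids s) x).card ≤ (G.componentIn s x).card := by
  obtain ⟨hxs, hxD⟩ := Finset.mem_sdiff.1 hx
  have hc := hG.isCentroid_centroid_componentIn hxs
  have hcD := hG.centroid_mem_centroids hxs
  have hsub : G.componentIn (s \ G.centroids s) x ⊆
      G.componentIn ((G.componentIn s x).erase (G.centroid (G.componentIn s x))) x := by
    refine componentIn_subset_componentIn fun y hy => Finset.mem_erase.2 ⟨?_, ?_⟩
    · rintro rfl
      exact (Finset.mem_sdiff.1 (componentIn_subset hy)).2 hcD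
    · exact componentIn_mono Finset.sdiff_subset hy
  refine (Nat.mul_le_mul_left 2 (Finset.card_le_card hsub)).trans (hc.2 x ?_)
  exact Finset.mem_erase.2 ⟨fun h => hxD (h ▸ hcD), self_mem_componentIn hxs⟩

end Centroids

theorem IsAcyclic.exists_isRankingOn [DecidableEq V] (hG : G.IsAcyclic) (k : ℕ) (s : Finset V)
    (hs : ∀ x ∈ s, (G.componentIn s x).card < 2 ^ k) :
    ∃ f : V → ℕ, (∀ v ∈ s, f v < k) ∧ G.IsRankingOn s f := by
  induction k generalizing s with
  | zero =>
    obtain rfl : s = ∅ := Finset.eq_empty_of_forall_notMem fun x hx => by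
      have := Finset.card_pos.2 ⟨x, self_mem_componentIn (G := G) hx⟩
      have := hs x hx
      rw [pow_zero] at this
      omega
    exact ⟨0, by simp, isRankingOn_empty 0⟩
  | succ k ih =>
    rcases s.eq_empty_or_nonempty with rfl | ⟨x₀, -⟩
    · exact ⟨0, by simp, isRankingOn_empty 0⟩
    have : Nonempty V := ⟨x₀⟩
    obtain ⟨f, hfk, hf⟩ := ih (s \ G.centroids s) fun x hx => by
      have := hG.two_mul_card_componentIn_sdiff_centroids_le hx
      have := hs x (Finset.sdiff_subset hx)
      rw [pow_succ] at this
      omega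
    refine ⟨fun v => if v ∈ G.centroids s then k else f v, fun v hv => ?_,
      hf.ite (fun _ hx _ hy => eq_of_mem_centroids_of_reachableIn hx hy) hfk⟩
    dsimp only
    split_ifs with hvD
    · exact k.lt_succ_self
    · exact (hfk v (Finset.mem_sdiff.2 ⟨hv, hvD⟩)).trans k.lt_succ_self

theorem IsTree.exists_cfvConnected [Fintype V] [DecidableEq V] (hG : G.IsTree) :
    ∃ C : V → Fin (Nat.log 2 (Fintype.card V) + 1), CFVConnected G C := by
  obtain ⟨f, hfk, hf⟩ := hG.isAcyclic.exists_isRankingOn _ Finset.univ fun _ _ =>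
    (Finset.card_le_univ _).trans_lt (Nat.lt_pow_succ_log_self one_lt_two _)
  refine ⟨fun v => ⟨f v, hfk v (Finset.mem_univ v)⟩, IsRankingOn.cfvConnected ?_ hG.connected⟩
  intro u v huv hfuv p hp
  simpa using hf huv (Fin.ext_iff.1 hfuv) p hp

end SimpleGraph

theorem CFVConnected.nontrivial {V α : Type*} [DecidableEq α] [Nontrivial V] {G : SimpleGraph V}
    {C : V → α} (hC : CFVConnected G C) : Nontrivial α := by
  obtain ⟨u, v, huv⟩ := exists_pair_ne V
  obtain ⟨p, -, c, hc⟩ := hC u v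
  by_contra hα
  rw [not_nontrivial_iff_subsingleton] at hα
  rw [List.countP_eq_length.2 fun x _ => by simp [Subsingleton.elim (C x) c], length_support,
    Nat.add_eq_right] at hc
  exact huv (eq_of_length_eq_zero hc)

theorem Nat.three_pow_log_two_succ_le {n : ℕ} (hn : 3 ≤ n) :
    3 ^ (Nat.log 2 n + 1) ≤ n * 2 ^ (Nat.log 2 n + 1) := by
  have hlow := Nat.pow_log_le_self 2 (by omega : n ≠ 0)
  have hup := Nat.lt_pow_succ_log_self one_lt_two n
  obtain ⟨m, hm⟩ : ∃ m, Nat.log 2 n = m + 1 :=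
    Nat.exists_eq_succ_of_ne_zero fun h => by rw [h] at hup; omega
  rw [hm] at hlow hup ⊢
  cases m with
  | zero => norm_num at hup ⊢; omega
  | succ m =>
    calc 3 ^ (m + 1 + 1 + 1) = 27 * 3 ^ m := by ring
      _ ≤ 32 * 4 ^ m := by have := Nat.pow_le_pow_left (show 3 ≤ 4 by norm_num) m; omega
      _ = 2 ^ (m + 1 + 1) * 2 ^ (m + 1 + 1 + 1) := by
        rw [show (4 : ℕ) = 2 ^ 2 by rfl, ← pow_mul]; ring
      _ ≤ n * 2 ^ (m + 1 + 1 + 1) := Nat.mul_le_mul_right _ hlow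

theorem Nat.log_two_add_one_le_logb {n : ℕ} (hn : 3 ≤ n) :
    ((Nat.log 2 n + 1 : ℕ) : ℝ) ≤ Real.logb (3 / 2) n := by
  rw [Real.le_logb_iff_rpow_le (by norm_num) (by positivity), Real.rpow_natCast, div_pow,
    div_le_iff₀ (by positivity)]
  exact_mod_cast Nat.three_pow_log_two_succ_le hn

theorem vcfc_le {V : Type*} {G : SimpleGraph V} {k : ℕ} {C : V → Fin k}
    (hC : CFVConnected G C) : vcfc G ≤ k :=
  Nat.sInf_le ⟨C, hC⟩

theorem exists_cfvConnected_fin_vcfc {V : Type*} {G : SimpleGraph V} {k : ℕ} {C : V → Fin k}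
    (hC : CFVConnected G C) : ∃ C : V → Fin (vcfc G), CFVConnected G C :=
  Nat.sInf_mem (s := {k : ℕ | ∃ C : V → Fin k, CFVConnected G C}) ⟨k, C, hC⟩

theorem vcfc_tree_bounds {V : Type*} [Fintype V] (T : SimpleGraph V) (h : T.IsTree)
    (n : ℕ) (hn : Fintype.card V = n) (h3 : 3 ≤ n) :
    T.chromaticNumber ≤ (vcfc T : ℕ∞) ∧
    Nat.clog 2 (T.diam + 1) ≤ vcfc T ∧
    (vcfc T : ℝ) ≤ Real.logb (3 / 2) n := by
  classical
  subst hn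
  have : Nontrivial V := Fintype.one_lt_card_iff_nontrivial.1 (by omega)
  obtain ⟨C, hC⟩ := h.exists_cfvConnected
  obtain ⟨C₀, hC₀⟩ := exists_cfvConnected_fin_vcfc hC
  refine ⟨?_, ?_, ?_⟩
  · calc T.chromaticNumber ≤ 2 := h.isBipartite.chromaticNumber_le
      _ ≤ vcfc T := by exact_mod_cast Fin.nontrivial_iff_two_le.1 hC₀.nontrivial
  · rw [Nat.clog_le_iff_le_pow one_lt_two]
    simpa using (h.diam_add_one_lt_two_pow hC₀).le
  · calc (vcfc T : ℝ) ≤ (Nat.log 2 (Fintype.card V) + 1 : ℕ) := by exact_mod_cast vcfc_le hC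
      _ ≤ Real.logb (3 / 2) (Fintype.card V) := Nat.log_two_add_one_le_logb h3
end

section
/- Let T be a tree with radius rad(T). Then vcfc(T) ≤ rad(T) + 1. -/
open SimpleGraph

/-- The eccentricity of a vertex: the maximum distance to another vertex. -/
noncomputable def eccent {V : Type*} (G : SimpleGraph V) (v : V) : ℕ :=
  sSup (Set.range (G.dist v))

/-- The radius of a graph: the minimum eccentricity over all vertices. -/
noncomputable def graphRadius {V : Type*} (G : SimpleGraph V) : ℕ :=
  sInf (Set.range (eccent G))

/-!
Colour each vertex by its distance to a centre `c`; this uses `rad T + 1` colours. On any path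
the vertex `w` closest to `c` is unique: for another vertex `z` of the path, a geodesic from `c`
to `w` followed by the subpath from `w` to `z` is again a path, because the vertices of the
geodesic other than `w` are strictly closer to `c` than `w`. In a tree every path is a geodesic,
so `dist c z > dist c w`, and the colour of `w` appears exactly once on the path.
-/

namespace SimpleGraph

variable {V : Type*} {G : SimpleGraph V}

lemma IsTree.length_eq_dist (hG : G.IsTree) {u v : V} {p : G.Walk u v} (hp : p.IsPath) :
    p.length = G.dist u v := by
  obtain ⟨q, hq, hql⟩ := hG.connected.exists_path_of_dist u v
  rw [(hG.existsUnique_path u v).unique hp hq, hql]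

lemma Walk.dist_lt_of_length_eq_dist {u v w : V} (p : G.Walk u v) (hp : p.length = G.dist u v)
    (hw : w ∈ p.support) (hwv : w ≠ v) : G.dist u w < G.dist u v := by
  classical
  exact hp ▸ (dist_le (p.takeUntil w hw)).trans_lt (p.length_takeUntil_lt_length hw hwv)

lemma Walk.IsPath.append_of_support_inter_subset {u v w : V} {p : G.Walk u v} {q : G.Walk v w}
    (hp : p.IsPath) (hq : q.IsPath) (hpq : ∀ x ∈ p.support, x ∈ q.support → x = v) :
    (p.append q).IsPath := by
  have hq' := hq.support_nodup
  rw [← q.cons_tail_support, List.nodup_cons] at hq'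
  rw [Walk.isPath_def, Walk.support_append, List.nodup_append]
  refine ⟨hp.support_nodup, hq'.2, fun x hx y hy hxy => ?_⟩
  subst hxy
  exact hq'.1 (hpq x hx (List.mem_of_mem_tail hy) ▸ hy)

lemma Walk.exists_isPath_support_subset_of_mem_support {u v w z : V} (p : G.Walk u v)
    (hw : w ∈ p.support) (hz : z ∈ p.support) :
    ∃ r : G.Walk w z, r.IsPath ∧ r.support ⊆ p.support := by
  classical
  let r := (p.takeUntil w hw).reverse.append (p.takeUntil z hz)
  refine ⟨r.bypass, r.bypass_isPath, fun x hx => ?_⟩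
  replace hx := r.support_bypass_subset_support hx
  rw [Walk.mem_support_append_iff, Walk.support_reverse, List.mem_reverse] at hx
  exact hx.elim (p.support_takeUntil_subset_support hw ·) (p.support_takeUntil_subset_support hz ·)

lemma IsTree.dist_lt_of_isPath_of_forall_le (hG : G.IsTree) (c : V) {w z : V} {r : G.Walk w z}
    (hr : r.IsPath) (hmin : ∀ y ∈ r.support, G.dist c w ≤ G.dist c y) (hzw : z ≠ w) :
    G.dist c w < G.dist c z := by
  obtain ⟨q, hq, hql⟩ := hG.connected.exists_path_of_dist c w
  have hqr : (q.append r).IsPath := hq.append_of_support_inter_subset hr fun y hyq hyr => by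
    by_contra hyw
    exact (hmin y hyr).not_gt (q.dist_lt_of_length_eq_dist hql hyq hyw)
  have hlen := hG.length_eq_dist hqr
  have hr0 : r.length ≠ 0 := fun h0 => hzw (Walk.eq_of_length_eq_zero h0).symm
  rw [Walk.length_append, hql] at hlen
  omega

lemma IsTree.exists_mem_support_forall_dist_lt (hG : G.IsTree) (c : V) {u v : V}
    (p : G.Walk u v) : ∃ w ∈ p.support, ∀ z ∈ p.support, z ≠ w → G.dist c w < G.dist c z := by
  classical
  obtain ⟨w, hw, hmin⟩ := p.support.toFinset.exists_min_image (G.dist c) ⟨u, by simp⟩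
  rw [List.mem_toFinset] at hw
  refine ⟨w, hw, fun z hz hzw => ?_⟩
  obtain ⟨r, hr, hrp⟩ := p.exists_isPath_support_subset_of_mem_support hw hz
  exact hG.dist_lt_of_isPath_of_forall_le c hr (fun y hy => hmin y (by simpa using hrp hy)) hzw

end SimpleGraph

lemma Walk.conflictFree_of_forall_ne {V α : Type*} [DecidableEq α] {G : SimpleGraph V}
    (C : V → α) {u v w : V} {p : G.Walk u v} (hp : p.IsPath) (hw : w ∈ p.support)
    (hC : ∀ z ∈ p.support, z ≠ w → C z ≠ C w) : Walk.ConflictFree C p := by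
  classical
  refine ⟨C w, ?_⟩
  rw [← List.count_eq_one_of_mem hp.support_nodup hw, List.count_eq_countP]
  refine List.countP_congr fun z hz => ?_
  by_cases hzw : z = w <;> simp [hzw, hC z hz]

lemma SimpleGraph.IsTree.cfvConnected {V α : Type*} [DecidableEq α] {G : SimpleGraph V}
    (hG : G.IsTree) (c : V) (C : V → α) (hC : ∀ x y, C x = C y → G.dist c x = G.dist c y) :
    CFVConnected G C := by
  intro u v
  obtain ⟨p, hp⟩ := (hG.existsUnique_path u v).exists
  obtain ⟨w, hw, hlt⟩ := hG.exists_mem_support_forall_dist_lt c p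
  exact ⟨p, hp, Walk.conflictFree_of_forall_ne C hp hw
    fun z hz hzw hCz => (hlt z hz hzw).ne' (hC z w hCz)⟩

lemma vcfc_le_of_cfvConnected {V : Type*} {G : SimpleGraph V} {k : ℕ} (C : V → Fin k)
    (hC : CFVConnected G C) : vcfc G ≤ k :=
  Nat.sInf_le ⟨C, hC⟩

lemma exists_eccent_eq_graphRadius {V : Type*} [Nonempty V] (G : SimpleGraph V) :
    ∃ c, _root_.eccent G c = graphRadius G :=
  Nat.sInf_mem (Set.range_nonempty _)

lemma dist_le_eccent {V : Type*} [Finite V] (G : SimpleGraph V) (c x : V) :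
    G.dist c x ≤ _root_.eccent G c :=
  le_csSup (Set.finite_range _).bddAbove ⟨x, rfl⟩

theorem vcfc_tree_le_radius {V : Type*} [Fintype V] (T : SimpleGraph V)
    (h : T.IsTree) : vcfc T ≤ graphRadius T + 1 := by
  have := h.connected.nonempty
  obtain ⟨c, hc⟩ := exists_eccent_eq_graphRadius T
  let C : V → Fin (graphRadius T + 1) :=
    fun x => ⟨T.dist c x, Nat.lt_succ_of_le (hc ▸ dist_le_eccent T c x)⟩
  exact vcfc_le_of_cfvConnected C (h.cfvConnected c C fun x y hxy => congrArg Fin.val hxy)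
end

section
/- Coloring the vertices of a tree T by their distance from a fixed central vertex (vertex at distance i gets color i+1) makes T conflict-free vertex-connected using rad(T)+1 colors. -/
open SimpleGraph

/-!
For vertices `u`, `w` let `r` be the path joining them. In a tree every path is a geodesic,
so a vertex of `r` nearest to `v` is unique: if `x ≠ y` both realised the minimal distance `d`,
the geodesic from `v` to `x` followed by the subpath of `r` from `x` to `y` would be a path to
`y` of length `> d`. Hence the colour `d + 1` occurs exactly once on `r`.
-/

theorem List.Nodup.countP_eq_one {α : Type*} {l : List α} (hl : l.Nodup) {p : α → Bool}
    {x : α} (hx : x ∈ l) (hpx : p x) (huniq : ∀ y ∈ l, p y → y = x) : l.countP p = 1 := by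
  classical
  rw [← List.count_eq_one_of_mem hl hx, List.count, List.countP_congr]
  intro y hy
  simpa using ⟨huniq y hy, fun hyx => hyx ▸ hpx⟩

namespace SimpleGraph

variable {V : Type*} {G : SimpleGraph V}

theorem dist_le_eccent [Finite V] (v x : V) : G.dist v x ≤ _root_.eccent G v :=
  le_csSup (Set.finite_range _).bddAbove ⟨x, rfl⟩

theorem Walk.dist_lt_of_length_eq_dist_s19 [DecidableEq V] {v x a : V} (g : G.Walk v x)
    (hg : g.length = G.dist v x) (ha : a ∈ g.support) (hax : a ≠ x) :
    G.dist v a < G.dist v x := by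
  have hsplit := congrArg Walk.length (g.take_spec ha)
  rw [Walk.length_append, hg] at hsplit
  have htake : G.dist v a ≤ (g.takeUntil a ha).length := dist_le _
  have hdrop : (g.dropUntil a ha).length ≠ 0 := fun h0 => hax (Walk.eq_of_length_eq_zero h0)
  omega

theorem Walk.exists_isPath_support_subset [DecidableEq V] {u w x y : V} (r : G.Walk u w)
    (hx : x ∈ r.support) (hy : y ∈ r.support) :
    ∃ s : G.Walk x y, s.IsPath ∧ s.support ⊆ r.support := by
  let t := (r.takeUntil x hx).reverse.append (r.takeUntil y hy)
  refine ⟨t.bypass, t.bypass_isPath, fun a ha => ?_⟩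
  have hat := t.support_bypass_subset_support ha
  rw [Walk.mem_support_append_iff, Walk.support_reverse, List.mem_reverse] at hat
  exact hat.elim (r.support_takeUntil_subset_support hx ·)
    (r.support_takeUntil_subset_support hy ·)

theorem IsAcyclic.length_eq_dist_of_isPath (hG : G.IsAcyclic) {u w : V} {p : G.Walk u w}
    (hp : p.IsPath) : p.length = G.dist u w := by
  obtain ⟨q, hq, hql⟩ := p.reachable.exists_path_of_dist
  have hpq : p = q := congrArg Subtype.val ((hG.subsingleton_path u w).elim ⟨p, hp⟩ ⟨q, hq⟩)
  rw [hpq, hql]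

theorem IsAcyclic.dist_eq_add_length (hG : G.IsAcyclic) {v x y : V} (hvx : G.Reachable v x)
    {s : G.Walk x y} (hs : s.IsPath) (hfar : ∀ a ∈ s.support, G.dist v x ≤ G.dist v a) :
    G.dist v y = G.dist v x + s.length := by
  classical
  obtain ⟨g, hg, hgl⟩ := hvx.exists_path_of_dist
  have hx : x ∉ s.support.tail :=
    (List.nodup_cons.mp (s.cons_tail_support ▸ hs.support_nodup)).1
  -- `g` and `s` meet only at `x`: every other vertex of the geodesic `g` is strictly closer to `v`.
  have hgs : (g.append s).IsPath := by
    rw [Walk.isPath_def, Walk.support_append]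
    refine hg.support_nodup.append hs.support_nodup.tail fun a hag has => ?_
    have hax : a ≠ x := fun hax => hx (hax ▸ has)
    exact (hfar a (List.mem_of_mem_tail has)).not_gt (g.dist_lt_of_length_eq_dist_s19 hgl hag hax)
  rw [← hG.length_eq_dist_of_isPath hgs, Walk.length_append, hgl]

theorem IsAcyclic.eq_of_dist_eq_of_forall_dist_le (hG : G.IsAcyclic) {u w v x y : V}
    (hvx : G.Reachable v x) (r : G.Walk u w) (hx : x ∈ r.support) (hy : y ∈ r.support)
    (hmin : ∀ a ∈ r.support, G.dist v x ≤ G.dist v a) (hxy : G.dist v y = G.dist v x) :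
    x = y := by
  classical
  obtain ⟨s, hs, hsr⟩ := r.exists_isPath_support_subset hx hy
  have hlen := hG.dist_eq_add_length hvx hs fun a ha => hmin a (hsr ha)
  exact s.eq_of_length_eq_zero (by omega)

theorem IsTree.cfvConnected_dist_add_one (hT : G.IsTree) (v : V) :
    CFVConnected G (fun x => G.dist v x + 1) := by
  classical
  intro u w
  obtain ⟨r, hr, -⟩ := hT.existsUnique_path u w
  obtain ⟨x, hx, hmin⟩ := r.support.toFinset.exists_min_image (G.dist v) ⟨u, by simp⟩
  simp only [List.mem_toFinset] at hx hmin
  refine ⟨r, hr, G.dist v x + 1, hr.support_nodup.countP_eq_one hx (by simp) ?_⟩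
  intro y hy hyx
  simp only [decide_eq_true_eq, Nat.add_right_cancel_iff] at hyx
  exact (hT.isAcyclic.eq_of_dist_eq_of_forall_dist_le (hT.connected v x) r hx hy hmin hyx).symm

end SimpleGraph

theorem distance_coloring_cfvc {V : Type*} [Fintype V] (T : SimpleGraph V)
    (h : T.IsTree) (v : V) (hv : _root_.eccent T v = graphRadius T) :
    CFVConnected T (fun x => T.dist v x + 1) ∧
    ∀ x : V, T.dist v x + 1 ≤ graphRadius T + 1 :=
  ⟨h.cfvConnected_dist_add_one v, fun x => Nat.add_le_add_right (hv ▸ dist_le_eccent v x) 1⟩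
end
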